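/- arXiv:1610.07530 — 7 statements merged into one kernel-verified Lean document; each statement's English description precedes it below -/
import Mathlib

section
/- Let G be a finite simple graph, S ⊆ V(G), and let C ⊆ V(G) be a set of vertices any two of which have the same neighborhood type (so that C induces a clique or an independent set), and suppose the threshold function f is constant on C. Then for every round i of the activation process arising from S, either C ∩ S_i = C ∩ S or C ∩ S_i = C. Moreover, the activation of C is monotone: if C ⊆ S_i then C ⊆ S_j for every j ≥ i, so there is a round index j such that C ∩ S_i = C ∩ S for all i ≤ j and C ∩ S_i = C for all i > j (with j = ∞ if C is never activated). -/
open Finset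

variable {V : Type*} [Fintype V] [DecidableEq V]

/-- One round of the activation process: a vertex becomes active if the number of its
already active neighbors is at least its threshold. -/
def actStep (G : SimpleGraph V) [DecidableRel G.Adj] (f : V → ℕ) (S : Finset V) : Finset V :=
  S ∪ Finset.univ.filter fun v => f v ≤ (G.neighborFinset v ∩ S).card

/-- The activation process arising from `S`: `S_0 = S` and
`S_{i+1} = S_i ∪ {v : |N(v) ∩ S_i| ≥ f v}`. -/
def actProcess (G : SimpleGraph V) [DecidableRel G.Adj] (f : V → ℕ) (S : Finset V) : ℕ → Finset V
  | 0 => S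
  | i + 1 => actStep G f (actProcess G f S i)

/-- `S` is a target set if the activation process arising from `S` eventually
activates the whole graph. -/
def IsTargetSet (G : SimpleGraph V) [DecidableRel G.Adj] (f : V → ℕ) (S : Finset V) : Prop :=
  ∃ i, actProcess G f S i = Finset.univ

/-- Two (distinct) vertices have the same neighborhood type if
`N(u) \ {v} = N(v) \ {u}`. -/
def SameNType (G : SimpleGraph V) (u v : V) : Prop :=
  G.neighborSet u \ {v} = G.neighborSet v \ {u}

/-- If every two vertices of `C` have the same neighborhood type and the threshold
function is constant on `C`, then in every round of the activation process either
`C ∩ S_i = C ∩ S` or `C ∩ S_i = C`; moreover once `C` is fully activated it stays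
activated in all later rounds. -/
theorem activation_uniform_on_type (G : SimpleGraph V) [DecidableRel G.Adj] (f : V → ℕ)
    (S C : Finset V)
    (hC : ∀ u ∈ C, ∀ v ∈ C, u ≠ v → SameNType G u v)
    (hf : ∀ u ∈ C, ∀ v ∈ C, f u = f v) :
    (∀ i : ℕ, C ∩ actProcess G f S i = C ∩ S ∨ C ∩ actProcess G f S i = C) ∧
    (∀ i j : ℕ, i ≤ j → C ⊆ actProcess G f S i → C ⊆ actProcess G f S j) := by
  have hmono : ∀ i, actProcess G f S i ⊆ actProcess G f S (i + 1) := fun i =>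
    Finset.subset_union_left
  have hmono' : ∀ i j, i ≤ j → actProcess G f S i ⊆ actProcess G f S j := by
    intro i j hij
    induction j, hij using Nat.le_induction with
    | base => exact subset_rfl
    | succ j hij ih => exact ih.trans (hmono j)
  -- key: same neighborhood type gives same active-neighbor set when both inactive
  have key : ∀ (u v : V) (T : Finset V), SameNType G u v → u ∉ T → v ∉ T →
      G.neighborFinset u ∩ T = G.neighborFinset v ∩ T := by
    intro u v T hst hu hv
    ext w
    simp only [Finset.mem_inter, SimpleGraph.mem_neighborFinset]
    constructor
    · rintro ⟨hw, hwT⟩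
      have hwv : w ≠ v := fun h => hv (h ▸ hwT)
      have : w ∈ G.neighborSet v \ {u} := by
        rw [← hst]; exact ⟨hw, hwv⟩
      exact ⟨this.1, hwT⟩
    · rintro ⟨hw, hwT⟩
      have hwu : w ≠ u := fun h => hu (h ▸ hwT)
      have : w ∈ G.neighborSet u \ {v} := by
        rw [hst]; exact ⟨hw, hwu⟩
      exact ⟨this.1, hwT⟩
  constructor
  · intro i
    induction i with
    | zero => left; rfl
    | succ i ih =>
      rcases ih with h | h
      · -- C ∩ S_i = C ∩ S
        by_cases hex : ∃ v ∈ C, v ∉ actProcess G f S i ∧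
            f v ≤ (G.neighborFinset v ∩ actProcess G f S i).card
        · -- everyone activates
          right
          rw [Finset.inter_eq_left]
          obtain ⟨v, hvC, hvS, hvf⟩ := hex
          intro u huC
          show u ∈ actStep G f (actProcess G f S i)
          by_cases huS : u ∈ actProcess G f S i
          · exact Finset.mem_union_left _ huS
          · refine Finset.mem_union_right _ (Finset.mem_filter.mpr ⟨Finset.mem_univ u, ?_⟩)
            by_cases huv : u = v
            · subst huv; exact hvf
            · rw [hf u huC v hvC, key u v _ (hC u huC v hvC huv) huS hvS]
              exact hvf
        · -- nobody activates
          left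
          rw [← h]
          ext u
          simp only [Finset.mem_inter]
          constructor
          · rintro ⟨huC, huS⟩
            refine ⟨huC, ?_⟩
            rcases Finset.mem_union.mp huS with h' | h'
            · exact h'
            · by_contra hn
              exact hex ⟨u, huC, hn, (Finset.mem_filter.mp h').2⟩
          · rintro ⟨huC, huS⟩
            exact ⟨huC, hmono i huS⟩
      · right
        rw [Finset.inter_eq_left] at h ⊢
        exact h.trans (hmono i)
  · intro i j hij hsub
    exact hsub.trans (hmono' i j hij)
end

section
/- Let G be a finite simple graph with twin cover T, with twin cliques C_1, …, C_q, and let f be the majority threshold function. If S is a target set of G, then |S ∩ C_i| ≥ k_{C_i} for every i = 1, …, q; in particular, every target set has size at least Σ_{i=1}^q k_{C_i}. -/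
open Finset

variable {V : Type*} [Fintype V] [DecidableEq V]

/-- `T` is a twin cover of `G` if every edge of `G` has an endpoint in `T`
or is a twin edge (its endpoints have the same neighborhood type). -/
def IsTwinCover (G : SimpleGraph V) (T : Finset V) : Prop :=
  ∀ u v : V, G.Adj u v → u ∈ T ∨ v ∈ T ∨ SameNType G u v

/-- The majority threshold function `f(v) = ⌈deg(v)/2⌉`. -/
def majority (G : SimpleGraph V) [DecidableRel G.Adj] (v : V) : ℕ :=
  (G.degree v + 1) / 2

/-- For a twin clique `C` with common cover-neighborhood `NC`, the common majority
threshold is `f'(C) = ⌈((|C| - 1) + |NC|)/2⌉ = (|C| + |NC|)/2`, and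
`k_C = max(f'(C) - |NC|, 0)` (natural subtraction). -/
def kval (C NC : Finset V) : ℕ :=
  (C.card + NC.card) / 2 - NC.card

/-- Lower bound: with the majority threshold function, any target set must contain at
least `k_{C_i}` vertices of each twin clique `C_i`; in particular every target set has
size at least `Σ_i k_{C_i}`. -/
theorem targetSet_lower_bound (G : SimpleGraph V) [DecidableRel G.Adj]
    (T : Finset V) (htc : IsTwinCover G T)
    (q : ℕ) (C NC : Fin q → Finset V)
    (hne : ∀ i, (C i).Nonempty)
    (hdisj : ∀ i j, i ≠ j → Disjoint (C i) (C j))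
    (hcover : Finset.univ.biUnion C = Finset.univ \ T)
    (hNT : ∀ i, NC i ⊆ T)
    (hnbr : ∀ i, ∀ v ∈ C i, G.neighborFinset v = (C i).erase v ∪ NC i)
    (S : Finset V) (hS : IsTargetSet G (majority G) S) :
    (∀ i, kval (C i) (NC i) ≤ (S ∩ C i).card) ∧
    (∑ i, kval (C i) (NC i)) ≤ S.card := by

  have key : ∀ i, kval (C i) (NC i) ≤ (S ∩ C i).card := by
    intro i
    by_contra hlt
    push_neg at hlt
    have hCdisjT : ∀ v ∈ C i, v ∉ T := by
      intro v hv
      have hm : v ∈ Finset.univ.biUnion C := mem_biUnion.mpr ⟨i, mem_univ i, hv⟩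
      rw [hcover, mem_sdiff] at hm
      exact hm.2
    have hcpos : 1 ≤ (C i).card := Finset.card_pos.mpr (hne i)
    have hfp : ∀ v ∈ C i, majority G v = ((C i).card + (NC i).card) / 2 := by
      intro v hv
      have hdisj' : Disjoint ((C i).erase v) (NC i) :=
        Finset.disjoint_left.mpr fun x hx hx' =>
          hCdisjT x (Finset.mem_of_mem_erase hx) (hNT i hx')
      have hdeg : G.degree v = ((C i).card - 1) + (NC i).card := by
        rw [SimpleGraph.degree, hnbr i v hv, Finset.card_union_of_disjoint hdisj',
          Finset.card_erase_of_mem hv]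
      unfold majority
      rw [hdeg]
      congr 1
      omega
    obtain ⟨m, hm⟩ := hS
    have inv : ∀ k, ∀ v ∈ actProcess G (majority G) S k, v ∈ C i → v ∈ S := by
      intro k
      induction k with
      | zero => intro v hv _; exact hv
      | succ k ih =>
        intro v hv hvC
        simp only [actProcess, actStep, mem_union, mem_filter] at hv
        rcases hv with hv | ⟨_, hmaj⟩
        · exact ih v hv hvC
        · exfalso
          have hsub : G.neighborFinset v ∩ actProcess G (majority G) S k ⊆
              (S ∩ C i) ∪ NC i := by
            intro x hx
            rw [Finset.mem_inter, hnbr i v hvC, Finset.mem_union] at hx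
            rcases hx with ⟨hx1 | hx1, hx2⟩
            · exact Finset.mem_union_left _ (Finset.mem_inter.mpr
                ⟨ih x hx2 (Finset.mem_of_mem_erase hx1), Finset.mem_of_mem_erase hx1⟩)
            · exact Finset.mem_union_right _ hx1
          have hcard : (G.neighborFinset v ∩ actProcess G (majority G) S k).card ≤
              (S ∩ C i).card + (NC i).card :=
            le_trans (Finset.card_le_card hsub) (Finset.card_union_le _ _)
          rw [hfp v hvC] at hmaj
          have hle : ((C i).card + (NC i).card) / 2 ≤ (S ∩ C i).card + (NC i).card :=
            le_trans hmaj hcard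
          unfold kval at hlt
          omega
    have hklec : kval (C i) (NC i) ≤ (C i).card := by unfold kval; omega
    have h1 : ¬ (C i ⊆ S ∩ C i) := fun h => absurd (Finset.card_le_card h) (by omega)
    obtain ⟨v, hvC, hv⟩ := Finset.not_subset.mp h1
    have : v ∈ actProcess G (majority G) S m := hm ▸ Finset.mem_univ v
    exact hv (Finset.mem_inter.mpr ⟨inv m v this hvC, hvC⟩)
  refine ⟨key, ?_⟩
  calc ∑ i, kval (C i) (NC i) ≤ ∑ i, (S ∩ C i).card := Finset.sum_le_sum fun i _ => key i
    _ = (Finset.univ.biUnion fun i => S ∩ C i).card := by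
        rw [Finset.card_biUnion]
        intro i _ j _ hij
        exact (hdisj i j hij).mono inter_subset_right inter_subset_right
    _ ≤ S.card := Finset.card_le_card (Finset.biUnion_subset.mpr fun i _ =>
        Finset.inter_subset_left)
end

section
/- Let G be a finite simple graph with twin cover T, with twin cliques C_1, …, C_q, and let f be the majority threshold function. If S ⊆ V(G) contains all of T and at least k_{C_i} vertices from each twin clique C_i, then S is a target set of G. In particular, G has a target set of size at most |T| + Σ_{i=1}^q k_{C_i}. -/
open Finset

variable {V : Type*} [Fintype V] [DecidableEq V]

/-- Upper bound: with the majority threshold function, any set containing the whole twin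
cover `T` and at least `k_{C_i}` vertices of each twin clique `C_i` is a target set; in
particular `G` has a target set of size at most `|T| + Σ_i k_{C_i}`. -/
theorem targetSet_upper_bound (G : SimpleGraph V) [DecidableRel G.Adj]
    (T : Finset V) (htc : IsTwinCover G T)
    (q : ℕ) (C NC : Fin q → Finset V)
    (hne : ∀ i, (C i).Nonempty)
    (hdisj : ∀ i j, i ≠ j → Disjoint (C i) (C j))
    (hcover : Finset.univ.biUnion C = Finset.univ \ T)
    (hNT : ∀ i, NC i ⊆ T)
    (hnbr : ∀ i, ∀ v ∈ C i, G.neighborFinset v = (C i).erase v ∪ NC i) :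
    (∀ S : Finset V, T ⊆ S → (∀ i, kval (C i) (NC i) ≤ (S ∩ C i).card) →
      IsTargetSet G (majority G) S) ∧
    (∃ S : Finset V, IsTargetSet G (majority G) S ∧
      S.card ≤ T.card + ∑ i, kval (C i) (NC i)) := by
  have key : ∀ S : Finset V, T ⊆ S → (∀ i, kval (C i) (NC i) ≤ (S ∩ C i).card) →
      IsTargetSet G (majority G) S := by
    intro S hTS hk
    refine ⟨1, ?_⟩
    show actStep G (majority G) S = Finset.univ
    apply Finset.eq_univ_of_forall
    intro v
    by_cases hvS : v ∈ S
    · exact Finset.mem_union_left _ hvS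
    · have hvT : v ∉ T := fun h => hvS (hTS h)
      have hv : v ∈ Finset.univ.biUnion C := by
        rw [hcover]; simp [hvT]
      obtain ⟨i, -, hvC⟩ := Finset.mem_biUnion.mp hv
      refine Finset.mem_union_right _ (Finset.mem_filter.mpr ⟨Finset.mem_univ _, ?_⟩)
      have hnb := hnbr i v hvC
      have hCT : Disjoint (C i) T := by
        have hsub : C i ⊆ Finset.univ \ T := by
          rw [← hcover]; exact Finset.subset_biUnion_of_mem C (Finset.mem_univ i)
        exact Finset.disjoint_left.mpr fun x hx => (Finset.mem_sdiff.mp (hsub hx)).2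
      have hdisjNC : Disjoint ((C i).erase v) (NC i) :=
        hCT.mono (Finset.erase_subset _ _) (hNT i)
      have hdeg : G.degree v = (C i).card - 1 + (NC i).card := by
        rw [← SimpleGraph.card_neighborFinset_eq_degree, hnb,
          Finset.card_union_of_disjoint hdisjNC, Finset.card_erase_of_mem hvC]
      have h1 : 1 ≤ (C i).card := Finset.card_pos.mpr ⟨v, hvC⟩
      have hmaj : majority G v = ((C i).card + (NC i).card) / 2 := by
        rw [majority, hdeg]; omega
      have hsub : NC i ∪ (S ∩ C i) ⊆ G.neighborFinset v ∩ S := by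
        rw [hnb]
        intro x hx
        rcases Finset.mem_union.mp hx with h | h
        · exact Finset.mem_inter.mpr ⟨Finset.mem_union_right _ h, hTS (hNT i h)⟩
        · obtain ⟨hxS, hxC⟩ := Finset.mem_inter.mp h
          refine Finset.mem_inter.mpr ⟨Finset.mem_union_left _ ?_, hxS⟩
          exact Finset.mem_erase.mpr ⟨fun h' => hvS (h' ▸ hxS), hxC⟩
      have hdisj2 : Disjoint (NC i) (S ∩ C i) :=
        hCT.symm.mono (hNT i) Finset.inter_subset_right
      have hcard : (NC i).card + (S ∩ C i).card ≤ (G.neighborFinset v ∩ S).card := by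
        rw [← Finset.card_union_of_disjoint hdisj2]
        exact Finset.card_le_card hsub
      have hki := hk i
      rw [hmaj]
      unfold kval at hki
      omega
  refine ⟨key, ?_⟩
  have hchoose : ∀ i, ∃ D : Finset V, D ⊆ C i ∧ D.card = kval (C i) (NC i) := by
    intro i
    have hle : kval (C i) (NC i) ≤ (C i).card := by unfold kval; omega
    obtain ⟨D, hD1, hD2⟩ := Finset.exists_subset_card_eq hle
    exact ⟨D, hD1, hD2⟩
  choose D hD hDcard using hchoose
  refine ⟨T ∪ Finset.univ.biUnion D, key _ Finset.subset_union_left ?_, ?_⟩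
  · intro i
    rw [← hDcard i]
    apply Finset.card_le_card
    intro x hx
    exact Finset.mem_inter.mpr ⟨Finset.mem_union_right _
      (Finset.mem_biUnion.mpr ⟨i, Finset.mem_univ _, hx⟩), hD i hx⟩
  · calc (T ∪ Finset.univ.biUnion D).card ≤ T.card + (Finset.univ.biUnion D).card :=
          Finset.card_union_le _ _
      _ ≤ T.card + ∑ i, (D i).card := by
          exact Nat.add_le_add_left (Finset.card_biUnion_le) _
      _ = T.card + ∑ i, kval (C i) (NC i) := by
          simp only [hDcard]
end

section
/- Let G be a finite simple graph with twin cover T, let f be a threshold function that is constant on every twin clique, and let Q ⊆ T. Call a twin clique C of type Q if N(C) = Q, and let V_Q be the union of all twin cliques of type Q. Let S, S′ ⊆ V(G) satisfy S ∖ V_Q = S′ ∖ V_Q and Σ_{C of type Q} |S ∩ C| = Σ_{C of type Q} |S′ ∩ C|. Then for every round j such that no twin clique of type Q is fully contained in S_j or in S′_j, the two activation processes agree outside V_Q: S_j ∖ V_Q = S′_j ∖ V_Q. (In other words, the rounds of the activation process before the first twin clique of type Q is activated do not depend on how the selected vertices are distributed among the twin cliques of type Q.) -/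
open Finset

variable {V : Type*} [Fintype V] [DecidableEq V]

lemma actProcess_mono (G : SimpleGraph V) [DecidableRel G.Adj] (f : V → ℕ) (S : Finset V) :
    Monotone (actProcess G f S) :=
  monotone_nat_of_le_succ fun n => by
    show actProcess G f S n ⊆ actStep G f (actProcess G f S n)
    exact Finset.subset_union_left

/-- Before the first twin clique of type `Q` is activated, the activation process outside
the union `V_Q` of twin cliques of type `Q` does not depend on how the selected vertices
are distributed among the twin cliques of type `Q`. -/
theorem activation_independent_of_distribution (G : SimpleGraph V) [DecidableRel G.Adj]
    (T : Finset V) (htc : IsTwinCover G T) (f : V → ℕ)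
    (q : ℕ) (C NC : Fin q → Finset V)
    (hne : ∀ i, (C i).Nonempty)
    (hdisj : ∀ i j, i ≠ j → Disjoint (C i) (C j))
    (hcover : Finset.univ.biUnion C = Finset.univ \ T)
    (hNT : ∀ i, NC i ⊆ T)
    (hnbr : ∀ i, ∀ v ∈ C i, G.neighborFinset v = (C i).erase v ∪ NC i)
    (hfconst : ∀ i, ∀ u ∈ C i, ∀ v ∈ C i, f u = f v)
    (Q : Finset V) (hQ : Q ⊆ T)
    (VQ : Finset V) (hVQ : VQ = (Finset.univ.filter fun i => NC i = Q).biUnion C)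
    (S S' : Finset V)
    (hout : S \ VQ = S' \ VQ)
    (hsum : ∑ i ∈ Finset.univ.filter (fun i => NC i = Q), (S ∩ C i).card =
            ∑ i ∈ Finset.univ.filter (fun i => NC i = Q), (S' ∩ C i).card)
    (j : ℕ)
    (hnoact : ∀ i, NC i = Q → ¬ C i ⊆ actProcess G f S j)
    (hnoact' : ∀ i, NC i = Q → ¬ C i ⊆ actProcess G f S' j) :
    actProcess G f S j \ VQ = actProcess G f S' j \ VQ := by
  classical
  set F : Finset (Fin q) := Finset.univ.filter (fun i => NC i = Q) with hF
  -- type-Q cliques are inside VQ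
  have hCVQ : ∀ i, NC i = Q → C i ⊆ VQ := by
    intro i hi
    rw [hVQ]
    intro v hv
    exact Finset.mem_biUnion.mpr ⟨i, Finset.mem_filter.mpr ⟨Finset.mem_univ _, hi⟩, hv⟩
  -- membership in VQ means membership in some type-Q clique
  have hVQmem : ∀ v ∈ VQ, ∃ i, NC i = Q ∧ v ∈ C i := by
    intro v hv
    rw [hVQ] at hv
    obtain ⟨i, hi, hvi⟩ := Finset.mem_biUnion.mp hv
    exact ⟨i, (Finset.mem_filter.mp hi).2, hvi⟩
  -- T is disjoint from VQ
  have hTVQ : ∀ v ∈ T, v ∉ VQ := by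
    intro v hvT hv
    obtain ⟨i, _, hvi⟩ := hVQmem v hv
    have : v ∈ Finset.univ.biUnion C := Finset.mem_biUnion.mpr ⟨i, Finset.mem_univ _, hvi⟩
    rw [hcover] at this
    exact (Finset.mem_sdiff.mp this).2 hvT
  -- adjacency characterization for clique vertices
  have hadj : ∀ i, ∀ u ∈ C i, ∀ v : V, G.Adj u v ↔ v ∈ (C i).erase u ∪ NC i := by
    intro i u hu v
    rw [← SimpleGraph.mem_neighborFinset, hnbr i u hu]
  -- for v outside VQ, its neighborhood meets VQ trivially or fully
  have hNVQ : ∀ v ∉ VQ, G.neighborFinset v ∩ VQ = ∅ ∨ G.neighborFinset v ∩ VQ = VQ := by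
    intro v hv
    by_cases hvQ : v ∈ Q
    · right
      apply Finset.inter_eq_right.mpr
      intro u hu
      obtain ⟨i, hi, hui⟩ := hVQmem u hu
      have : G.Adj u v := (hadj i u hui v).mpr (Finset.mem_union_right _ (hi ▸ hvQ))
      exact (SimpleGraph.mem_neighborFinset G v u).mpr this.symm
    · left
      apply Finset.eq_empty_of_forall_notMem
      intro u hu
      obtain ⟨hun, huV⟩ := Finset.mem_inter.mp hu
      obtain ⟨i, hi, hui⟩ := hVQmem u huV
      have hadjuv : G.Adj u v := ((SimpleGraph.mem_neighborFinset G v u).mp hun).symm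
      rcases Finset.mem_union.mp ((hadj i u hui v).mp hadjuv) with h | h
      · exact hv (hCVQ i hi (Finset.mem_of_mem_erase h))
      · exact hvQ (hi ▸ h)
  -- counting lemma: for v outside VQ, the neighbor count only depends on A \ VQ and |A ∩ VQ|
  have hcard : ∀ v ∉ VQ, ∀ A A' : Finset V, A \ VQ = A' \ VQ →
      (A ∩ VQ).card = (A' ∩ VQ).card →
      (G.neighborFinset v ∩ A).card = (G.neighborFinset v ∩ A').card := by
    intro v hv A A' hAA hAA'
    have split : ∀ B : Finset V,
        G.neighborFinset v ∩ B = (G.neighborFinset v ∩ (B \ VQ)) ∪ ((G.neighborFinset v ∩ VQ) ∩ B) := by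
      intro B
      ext x
      simp only [Finset.mem_inter, Finset.mem_union, Finset.mem_sdiff]
      by_cases hx : x ∈ VQ <;> tauto
    have hd : ∀ B : Finset V,
        Disjoint (G.neighborFinset v ∩ (B \ VQ)) ((G.neighborFinset v ∩ VQ) ∩ B) := by
      intro B
      apply Finset.disjoint_left.mpr
      intro x hx1 hx2
      exact (Finset.mem_sdiff.mp (Finset.mem_inter.mp hx1).2).2
        (Finset.mem_inter.mp (Finset.mem_inter.mp hx2).1).2
    rw [split A, split A', Finset.card_union_of_disjoint (hd A),
      Finset.card_union_of_disjoint (hd A'), hAA]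
    congr 1
    rcases hNVQ v hv with h | h
    · rw [h]; simp
    · rw [h, Finset.inter_comm VQ A, Finset.inter_comm VQ A', hAA']
  -- |A ∩ VQ| as a sum over type-Q cliques
  have hsumcard : ∀ A : Finset V, (A ∩ VQ).card = ∑ i ∈ F, (A ∩ C i).card := by
    intro A
    have : A ∩ VQ = F.biUnion (fun i => A ∩ C i) := by
      rw [hVQ]
      ext x
      simp only [Finset.mem_inter, Finset.mem_biUnion, ← hF]
      tauto
    rw [this]
    apply Finset.card_biUnion
    intro i hi k hk hik
    exact Finset.disjoint_of_subset_left Finset.inter_subset_right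
      (Finset.disjoint_of_subset_right Finset.inter_subset_right (hdisj i k hik))
  -- one step doesn't change the trace in a type-Q clique unless it activates it entirely
  have step_eq : ∀ A : Finset V, (∀ i, NC i = Q → ¬ C i ⊆ actStep G f A) →
      ∀ i, NC i = Q → actStep G f A ∩ C i = A ∩ C i := by
    intro A hA i hi
    apply Finset.Subset.antisymm
    · intro v hv
      obtain ⟨hvs, hvC⟩ := Finset.mem_inter.mp hv
      by_cases hvA : v ∈ A
      · exact Finset.mem_inter.mpr ⟨hvA, hvC⟩
      exfalso
      have hcnt : ∀ w ∈ C i, w ∉ A →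
          G.neighborFinset w ∩ A = (C i ∪ NC i) ∩ A := by
        intro w hw hwA
        rw [hnbr i w hw]
        ext x
        simp only [Finset.mem_inter, Finset.mem_union, Finset.mem_erase]
        have : x ∈ A → x ≠ w := fun hx heq => hwA (heq ▸ hx)
        tauto
      have hvf : f v ≤ (G.neighborFinset v ∩ A).card := by
        rcases Finset.mem_union.mp hvs with h | h
        · exact absurd h hvA
        · exact (Finset.mem_filter.mp h).2
      apply hA i hi
      intro u hu
      by_cases huA : u ∈ A
      · exact Finset.mem_union_left _ huA
      · apply Finset.mem_union_right
        apply Finset.mem_filter.mpr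
        refine ⟨Finset.mem_univ _, ?_⟩
        rw [hcnt u hu huA, ← hcnt v hvC hvA, hfconst i u hu v hvC]
        exact hvf
    · exact Finset.inter_subset_inter Finset.subset_union_left (Finset.Subset.refl _)
  -- main invariant by induction
  have key : ∀ k : ℕ, (∀ i, NC i = Q → ¬ C i ⊆ actProcess G f S k) →
      (∀ i, NC i = Q → ¬ C i ⊆ actProcess G f S' k) →
      (actProcess G f S k \ VQ = actProcess G f S' k \ VQ) ∧
      (∀ i, NC i = Q → actProcess G f S k ∩ C i = S ∩ C i) ∧
      (∀ i, NC i = Q → actProcess G f S' k ∩ C i = S' ∩ C i) := by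
    intro k
    induction k with
    | zero => exact fun _ _ => ⟨hout, fun _ _ => rfl, fun _ _ => rfl⟩
    | succ n ih =>
      intro hna hna'
      have hmono : actProcess G f S n ⊆ actProcess G f S (n + 1) :=
        actProcess_mono G f S (Nat.le_succ n)
      have hmono' : actProcess G f S' n ⊆ actProcess G f S' (n + 1) :=
        actProcess_mono G f S' (Nat.le_succ n)
      obtain ⟨h1, h2, h3⟩ := ih
        (fun i hi hc => hna i hi (hc.trans hmono))
        (fun i hi hc => hna' i hi (hc.trans hmono'))
      have hsucc : actProcess G f S (n + 1) = actStep G f (actProcess G f S n) := rfl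
      have hsucc' : actProcess G f S' (n + 1) = actStep G f (actProcess G f S' n) := rfl
      have hq2 : ∀ i, NC i = Q → actProcess G f S (n + 1) ∩ C i = S ∩ C i := by
        intro i hi
        rw [hsucc, step_eq _ (fun i' hi' => hsucc ▸ hna i' hi') i hi, h2 i hi]
      have hq3 : ∀ i, NC i = Q → actProcess G f S' (n + 1) ∩ C i = S' ∩ C i := by
        intro i hi
        rw [hsucc', step_eq _ (fun i' hi' => hsucc' ▸ hna' i' hi') i hi, h3 i hi]
      -- equal cardinalities inside VQ at level n
      have hcV : (actProcess G f S n ∩ VQ).card = (actProcess G f S' n ∩ VQ).card := by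
        rw [hsumcard, hsumcard]
        calc ∑ i ∈ F, (actProcess G f S n ∩ C i).card
            = ∑ i ∈ F, (S ∩ C i).card :=
              Finset.sum_congr rfl fun i hi => by rw [h2 i (Finset.mem_filter.mp hi).2]
          _ = ∑ i ∈ F, (S' ∩ C i).card := hsum
          _ = ∑ i ∈ F, (actProcess G f S' n ∩ C i).card :=
              Finset.sum_congr rfl fun i hi => by rw [h3 i (Finset.mem_filter.mp hi).2]
      -- outside VQ, membership at step n+1 agrees
      have hstep : ∀ v ∉ VQ,
          (v ∈ actProcess G f S (n + 1) ↔ v ∈ actProcess G f S' (n + 1)) := by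
        intro v hv
        have hvmem : v ∈ actProcess G f S n ↔ v ∈ actProcess G f S' n := by
          constructor
          · intro h
            exact (Finset.mem_sdiff.mp (h1 ▸ Finset.mem_sdiff.mpr ⟨h, hv⟩)).1
          · intro h
            exact (Finset.mem_sdiff.mp (h1.symm ▸ Finset.mem_sdiff.mpr ⟨h, hv⟩)).1
        have hceq : (G.neighborFinset v ∩ actProcess G f S n).card =
            (G.neighborFinset v ∩ actProcess G f S' n).card :=
          hcard v hv _ _ h1 hcV
        rw [hsucc, hsucc']
        unfold actStep
        simp only [Finset.mem_union, Finset.mem_filter, Finset.mem_univ, true_and, hceq, hvmem]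
      refine ⟨?_, hq2, hq3⟩
      ext v
      simp only [Finset.mem_sdiff]
      constructor
      · rintro ⟨h, hv⟩; exact ⟨(hstep v hv).mp h, hv⟩
      · rintro ⟨h, hv⟩; exact ⟨(hstep v hv).mpr h, hv⟩
  exact (key j hnoact hnoact').1
end

section
/- Let G′ be a finite simple graph with threshold function f containing a selection gadget L(s,t) with t > s, with selection part A ∪ B and guard set D. If S ⊆ V(G′) is a set whose activation process activates every vertex of D (in particular, if S is a target set of G′), then |S ∩ (A ∪ B ∪ D)| ≥ s, and if |S ∩ (A ∪ B ∪ D)| = s then S ∩ D = ∅, i.e., all s of these vertices lie in the selection part A ∪ B. Conversely, if |S ∩ (A ∪ B)| ≥ s, then every vertex of D is activated in the first round: D ⊆ S_1. -/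
open Finset

variable {V : Type*} [Fintype V] [DecidableEq V]

/-- Properties of the selection gadget `L(s,t)` with `t > s`: the gadget has selection
part `A ∪ B` (two independent sets of size `s`) and a guard set `D` of `t` vertices,
each adjacent exactly to `A ∪ B`; vertices of `A ∪ B` have threshold equal to their
degree and vertices of `D` have threshold `s`.  Any set whose activation process
activates all of `D` contains at least `s` vertices of the gadget, and if exactly `s`
then all of them lie in the selection part; conversely `s` selected vertices in the
selection part activate all of `D` in the first round. -/
theorem selection_gadget_properties (G : SimpleGraph V) [DecidableRel G.Adj] (f : V → ℕ)
    (s t : ℕ) (hst : s < t)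
    (A B D : Finset V)
    (hAB : Disjoint A B) (hAD : Disjoint A D) (hBD : Disjoint B D)
    (hAcard : A.card = s) (hBcard : B.card = s) (hDcard : D.card = t)
    (hAind : ∀ u ∈ A, ∀ v ∈ A, ¬ G.Adj u v)
    (hBind : ∀ u ∈ B, ∀ v ∈ B, ¬ G.Adj u v)
    (hDind : ∀ u ∈ D, ∀ v ∈ D, ¬ G.Adj u v)
    (hDnbr : ∀ v ∈ D, G.neighborFinset v = A ∪ B)
    (hfAB : ∀ v ∈ A ∪ B, f v = G.degree v)
    (hfD : ∀ v ∈ D, f v = s) :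
    (∀ S : Finset V, (∃ i, D ⊆ actProcess G f S i) →
      s ≤ (S ∩ (A ∪ B ∪ D)).card ∧
      ((S ∩ (A ∪ B ∪ D)).card = s → S ∩ D = ∅)) ∧
    (∀ S : Finset V, s ≤ (S ∩ (A ∪ B)).card → D ⊆ actProcess G f S 1) := by

  classical
  have hmem_step : ∀ (T : Finset V) (v : V),
      v ∈ actStep G f T ↔ v ∈ T ∨ f v ≤ (G.neighborFinset v ∩ T).card := by
    intro T v
    simp [actStep]
  have hABD : Disjoint (A ∪ B) D := by
    rw [Finset.disjoint_union_left]; exact ⟨hAD, hBD⟩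
  have hDnbrAB : ∀ u ∈ A ∪ B, D ⊆ G.neighborFinset u := by
    intro u hu v hv
    rw [SimpleGraph.mem_neighborFinset, G.adj_comm, ← SimpleGraph.mem_neighborFinset,
      hDnbr v hv]
    exact hu
  constructor
  · intro S hS
    -- key: while D is not fully active, no A∪B vertex is activated beyond S
    have key : ∀ k, ¬ D ⊆ actProcess G f S k → (A ∪ B) ∩ actProcess G f S k ⊆ S := by
      intro k
      induction k with
      | zero => intro _; exact Finset.inter_subset_right
      | succ m ih =>
        intro hnd u hu
        have hmsub : actProcess G f S m ⊆ actProcess G f S (m+1) := by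
          show actProcess G f S m ⊆ actStep G f (actProcess G f S m)
          exact Finset.subset_union_left
        have hndm : ¬ D ⊆ actProcess G f S m := fun h => hnd (h.trans hmsub)
        rw [Finset.mem_inter] at hu
        rcases (hmem_step _ u).1 hu.2 with hu2 | hu2
        · exact ih hndm (Finset.mem_inter.2 ⟨hu.1, hu2⟩)
        · exfalso
          have hdeg : G.degree u ≤ (G.neighborFinset u ∩ actProcess G f S m).card := by
            rw [← hfAB u hu.1]; exact hu2
          have hfull : G.neighborFinset u ∩ actProcess G f S m = G.neighborFinset u := by
            apply Finset.eq_of_subset_of_card_le Finset.inter_subset_left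
            rw [G.card_neighborFinset_eq_degree]
            exact hdeg
          apply hndm
          intro v hv
          have : v ∈ G.neighborFinset u ∩ actProcess G f S m := by
            rw [hfull]; exact hDnbrAB u hu.1 hv
          exact (Finset.mem_inter.1 this).2
    by_cases hDS : D ⊆ S
    · have hDsub : D ⊆ S ∩ (A ∪ B ∪ D) := fun v hv =>
        Finset.mem_inter.2 ⟨hDS hv, Finset.mem_union_right _ hv⟩
      have ht : t ≤ (S ∩ (A ∪ B ∪ D)).card := hDcard ▸ Finset.card_le_card hDsub
      exact ⟨le_of_lt (lt_of_lt_of_le hst ht), fun heq => absurd heq (by omega)⟩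
    · have hS' : ∃ i, D ⊆ actProcess G f S i := hS
      have hnD : D ⊆ actProcess G f S (Nat.find hS') := Nat.find_spec hS'
      have hn0 : Nat.find hS' ≠ 0 := by
        intro h
        rw [h] at hnD
        exact hDS hnD
      obtain ⟨m, hm⟩ := Nat.exists_eq_succ_of_ne_zero hn0
      rw [hm] at hnD
      have hndm : ¬ D ⊆ actProcess G f S m := Nat.find_min hS' (by omega)
      obtain ⟨v, hvD, hvm⟩ := Finset.not_subset.1 hndm
      have hv1 : v ∈ actStep G f (actProcess G f S m) := hnD hvD
      rcases (hmem_step _ v).1 hv1 with h | h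
      · exact absurd h hvm
      · rw [hfD v hvD, hDnbr v hvD] at h
        have hsub : (A ∪ B) ∩ actProcess G f S m ⊆ S ∩ (A ∪ B) := fun u hu =>
          Finset.mem_inter.2 ⟨key m hndm hu, (Finset.mem_inter.1 hu).1⟩
        have hs : s ≤ (S ∩ (A ∪ B)).card := le_trans h (Finset.card_le_card hsub)
        have hsplit : S ∩ (A ∪ B ∪ D) = (S ∩ (A ∪ B)) ∪ (S ∩ D) :=
          Finset.inter_union_distrib_left S (A ∪ B) D
        have hdisj : Disjoint (S ∩ (A ∪ B)) (S ∩ D) :=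
          Disjoint.mono Finset.inter_subset_right Finset.inter_subset_right hABD
        have hcard : (S ∩ (A ∪ B ∪ D)).card = (S ∩ (A ∪ B)).card + (S ∩ D).card := by
          rw [hsplit, Finset.card_union_of_disjoint hdisj]
        refine ⟨by omega, fun heq => Finset.card_eq_zero.1 (by omega)⟩
  · intro S hSAB v hv
    show v ∈ actStep G f S
    rw [hmem_step]
    right
    rw [hDnbr v hv, hfD v hv, Finset.inter_comm]
    exact hSAB
end

section
/- Let G′ be a finite simple graph with threshold function f containing a multiple gadget M(q, t′, s, t) with t > qs and t′ ≥ qs, with selection part A ∪ B, guards D and P, and sets U = {u_1, …, u_s}, W = {w_1, …, w_s}. If S is a target set of G′, then |S ∩ V(M)| ≥ qs; and if |S ∩ V(M)| = qs, then all qs of these vertices lie in A ∪ B and the numbers |S ∩ A| and |S ∩ B| are divisible by q. Conversely, if |S ∩ A| = qa and |S ∩ B| = q(s − a) for some 0 ≤ a ≤ s, then every vertex of D, U, W, and P is activated within the first three rounds of the activation process arising from S. -/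
open Finset

variable {V : Type*} [Fintype V] [DecidableEq V]

lemma mem_actStep_iff {G : SimpleGraph V} [DecidableRel G.Adj] {f : V → ℕ} {S : Finset V}
    {v : V} : v ∈ actStep G f S ↔ v ∈ S ∨ f v ≤ (G.neighborFinset v ∩ S).card := by
  simp [actStep]

lemma actProcess_succ (G : SimpleGraph V) [DecidableRel G.Adj] (f : V → ℕ) (S : Finset V)
    (i : ℕ) : actProcess G f S (i + 1) = actStep G f (actProcess G f S i) := rfl

lemma actProcess_invariant {G : SimpleGraph V} [DecidableRel G.Adj] {f : V → ℕ} {S : Finset V}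
    (I : Finset V → Prop) (h0 : I S) (hstep : ∀ T, I T → I (actStep G f T)) :
    ∀ i, I (actProcess G f S i) := by
  intro i
  induction i with
  | zero => exact h0
  | succ n ih => exact hstep _ ih

lemma not_isTargetSet_of_invariant {G : SimpleGraph V} [DecidableRel G.Adj] {f : V → ℕ}
    {S : Finset V} (I : Finset V → Prop) (h0 : I S)
    (hstep : ∀ T, I T → I (actStep G f T)) {v : V} (hv : ∀ T, I T → v ∉ T) :
    ¬ IsTargetSet G f S := by
  rintro ⟨i, hi⟩
  exact hv _ (actProcess_invariant I h0 hstep i) (by rw [hi]; exact mem_univ v)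

lemma card_filter_val_lt (s m : ℕ) (hm : m ≤ s) :
    (Finset.univ.filter fun i : Fin s => i.val < m).card = m := by
  have h : ∀ k ∈ Finset.range m, k < s := fun k hk => lt_of_lt_of_le (mem_range.mp hk) hm
  have : (Finset.univ.filter fun i : Fin s => i.val < m) = (Finset.range m).attachFin h := by
    ext i
    simp [Finset.mem_attachFin, Finset.mem_range]
  rw [this, Finset.card_attachFin, Finset.card_range]

/-- Properties of the multiple gadget `M(q, t', s, t)` with `t > qs` and `t' ≥ qs`:
any target set contains at least `qs` vertices of the gadget, and if exactly `qs` then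
all of them lie in the selection part `A ∪ B`, with the numbers of selected vertices in
`A` and in `B` divisible by `q`; conversely, if `|S ∩ A| = qa` and `|S ∩ B| = q(s-a)`,
then all of `D`, `U`, `W` and `P` are activated within the first three rounds. -/
theorem multiple_gadget_properties (G : SimpleGraph V) [DecidableRel G.Adj] (f : V → ℕ)
    (q s t t' : ℕ) (ht : q * s < t) (ht' : q * s ≤ t')
    (A B D P : Finset V) (u w : Fin s → V)
    (hu : Function.Injective u) (hw : Function.Injective w)
    (hdisj : List.Pairwise Disjoint
      [A, B, D, Finset.univ.image u, Finset.univ.image w, P])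
    (hAcard : A.card = q * s) (hBcard : B.card = q * s)
    (hDcard : D.card = t) (hPcard : P.card = t')
    (hAind : ∀ x ∈ A, ∀ y ∈ A, ¬ G.Adj x y)
    (hBind : ∀ x ∈ B, ∀ y ∈ B, ¬ G.Adj x y)
    (hDnbr : ∀ v ∈ D, G.neighborFinset v = A ∪ B)
    (hUnbr : ∀ i : Fin s, G.neighborFinset (u i) = A ∪ P)
    (hWnbr : ∀ i : Fin s, G.neighborFinset (w i) = B ∪ P)
    (hPnbr : ∀ v ∈ P,
      G.neighborFinset v = Finset.univ.image u ∪ Finset.univ.image w)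
    (hfAB : ∀ v ∈ A ∪ B, f v = G.degree v)
    (hfD : ∀ v ∈ D, f v = q * s)
    (hfU : ∀ i : Fin s, f (u i) = q * (i.val + 1))
    (hfW : ∀ i : Fin s, f (w i) = q * (i.val + 1))
    (hfP : ∀ v ∈ P, f v = s) :
    (∀ S : Finset V, IsTargetSet G f S →
      q * s ≤ (S ∩ (A ∪ B ∪ D ∪ Finset.univ.image u ∪ Finset.univ.image w ∪ P)).card ∧
      ((S ∩ (A ∪ B ∪ D ∪ Finset.univ.image u ∪ Finset.univ.image w ∪ P)).card = q * s →
        S ∩ (A ∪ B ∪ D ∪ Finset.univ.image u ∪ Finset.univ.image w ∪ P) ⊆ A ∪ B ∧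
        q ∣ (S ∩ A).card ∧ q ∣ (S ∩ B).card)) ∧
    (∀ S : Finset V, ∀ a : ℕ, a ≤ s →
      (S ∩ A).card = q * a → (S ∩ B).card = q * (s - a) →
      D ∪ Finset.univ.image u ∪ Finset.univ.image w ∪ P ⊆ actProcess G f S 3) := by
  set UU := Finset.univ.image u with hUUdef
  set WW := Finset.univ.image w with hWWdef
  set M : Finset V := A ∪ B ∪ D ∪ UU ∪ WW ∪ P with hMdef
  -- disjointness facts
  simp only [List.pairwise_cons, List.mem_cons, List.mem_singleton, List.not_mem_nil,
    forall_eq_or_imp, forall_eq, List.Pairwise.nil] at hdisj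
  obtain ⟨⟨hAB, hAD, hAU, hAW, hAP, -⟩, ⟨hBD, hBU, hBW, hBP, -⟩, ⟨hDU, hDW, hDP, -⟩,
    ⟨hUW, hUP, -⟩, ⟨hWP, -⟩, -⟩ := hdisj
  -- basic helpers
  have hadj : ∀ x y : V, x ∈ G.neighborFinset y ↔ y ∈ G.neighborFinset x := by
    intro x y
    rw [SimpleGraph.mem_neighborFinset, SimpleGraph.mem_neighborFinset, G.adj_comm]
  have hfull : ∀ v ∈ A ∪ B, ∀ T : Finset V,
      f v ≤ (G.neighborFinset v ∩ T).card → G.neighborFinset v ⊆ T := by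
    intro v hv T h
    rw [hfAB v hv] at h
    have h2 : G.neighborFinset v ∩ T = G.neighborFinset v :=
      Finset.eq_of_subset_of_card_le Finset.inter_subset_left
        (by rw [G.card_neighborFinset_eq_degree]; exact h)
    exact Finset.inter_eq_left.mp h2
  have hsplit : ∀ (X Y T : Finset V), Disjoint X Y →
      ((X ∪ Y) ∩ T).card = (X ∩ T).card + (Y ∩ T).card := by
    intro X Y T hXY
    rw [Finset.union_inter_distrib_right,
      Finset.card_union_of_disjoint (hXY.mono Finset.inter_subset_left Finset.inter_subset_left)]
  have hABM : A ∪ B ⊆ M := by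
    intro x hx
    simp only [hMdef, mem_union] at hx ⊢
    tauto
  have hDM : D ⊆ M := by
    intro x hx
    simp only [hMdef, mem_union]
    tauto
  have hUM : ∀ i : Fin s, u i ∈ M := by
    intro i
    simp only [hMdef, mem_union]
    exact Or.inl (Or.inl (Or.inr (mem_image_of_mem u (mem_univ i))))
  have hWM : ∀ i : Fin s, w i ∈ M := by
    intro i
    simp only [hMdef, mem_union]
    exact Or.inl (Or.inr (mem_image_of_mem w (mem_univ i)))
  have hPM : P ⊆ M := by
    intro x hx
    simp only [hMdef, mem_union]
    tauto
  -- core lemma for part 1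
  have part1core : ∀ S : Finset V, (S ∩ (A ∪ B)).card < q * s → ¬ D ⊆ S →
      ¬ IsTargetSet G f S := by
    intro S hlt hDS
    obtain ⟨d, hdD, hdS⟩ := Finset.not_subset.mp hDS
    have hA_not : ¬ A ⊆ S := by
      intro hAS
      have h1 : A ⊆ S ∩ (A ∪ B) := fun x hx =>
        mem_inter.mpr ⟨hAS hx, mem_union_left _ hx⟩
      have := Finset.card_le_card h1
      omega
    obtain ⟨a0, ha0A, ha0S⟩ := Finset.not_subset.mp hA_not
    have h0 : (fun T : Finset V => T ∩ (A ∪ B) ⊆ S ∩ (A ∪ B) ∧ T ∩ D ⊆ S) S :=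
      ⟨Finset.Subset.refl _, Finset.inter_subset_left⟩
    have hstep : ∀ T : Finset V,
        (T ∩ (A ∪ B) ⊆ S ∩ (A ∪ B) ∧ T ∩ D ⊆ S) →
        (actStep G f T ∩ (A ∪ B) ⊆ S ∩ (A ∪ B) ∧ actStep G f T ∩ D ⊆ S) := by
      intro T hT
      constructor
      · intro v hv
        rw [mem_inter] at hv
        obtain ⟨hv1, hv2⟩ := hv
        rcases mem_actStep_iff.mp hv1 with h | h
        · exact hT.1 (mem_inter.mpr ⟨h, hv2⟩)
        · exfalso
          have hN := hfull v hv2 T h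
          have hdT : d ∈ T := hN ((hadj d v).mpr (by rw [hDnbr d hdD]; exact hv2))
          exact hdS (hT.2 (mem_inter.mpr ⟨hdT, hdD⟩))
      · intro v hv
        rw [mem_inter] at hv
        obtain ⟨hv1, hv2⟩ := hv
        rcases mem_actStep_iff.mp hv1 with h | h
        · exact hT.2 (mem_inter.mpr ⟨h, hv2⟩)
        · exfalso
          rw [hfD v hv2, hDnbr v hv2] at h
          have hle : ((A ∪ B) ∩ T).card ≤ (S ∩ (A ∪ B)).card := by
            apply Finset.card_le_card
            intro x hx
            rw [mem_inter] at hx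
            exact hT.1 (mem_inter.mpr ⟨hx.2, hx.1⟩)
          omega
    exact not_isTargetSet_of_invariant (v := a0) _ h0 hstep
      (fun T hT hmem => ha0S (mem_of_mem_inter_left
        (hT.1 (mem_inter.mpr ⟨hmem, mem_union_left _ ha0A⟩))))
  constructor
  · -- part 1
    intro S hS
    have hSABM : S ∩ (A ∪ B) ⊆ S ∩ M :=
      Finset.inter_subset_inter (Finset.Subset.refl S) hABM
    have g1 : q * s ≤ (S ∩ M).card := by
      by_contra hc
      push_neg at hc
      refine part1core S ?_ ?_ hS
      · exact lt_of_le_of_lt (Finset.card_le_card hSABM) hc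
      · intro hDsub
        have h1 : D ⊆ S ∩ M := fun x hx => mem_inter.mpr ⟨hDsub hx, hDM hx⟩
        have := Finset.card_le_card h1
        omega
    refine ⟨g1, ?_⟩
    intro heq
    have hDnsub : ¬ D ⊆ S := by
      intro hDsub
      have h1 : D ⊆ S ∩ M := fun x hx => mem_inter.mpr ⟨hDsub hx, hDM hx⟩
      have := Finset.card_le_card h1
      omega
    have hsub : S ∩ M ⊆ A ∪ B := by
      by_contra hc
      obtain ⟨x, hx, hxAB⟩ := Finset.not_subset.mp hc
      refine part1core S ?_ hDnsub hS
      have h1 : S ∩ (A ∪ B) ⊆ (S ∩ M).erase x := by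
        intro y hy
        rw [mem_erase]
        refine ⟨?_, hSABM hy⟩
        rintro rfl
        exact hxAB (mem_of_mem_inter_right hy)
      have h2 := Finset.card_le_card h1
      have h3 := Finset.card_erase_of_mem hx
      have h4 : 1 ≤ (S ∩ M).card := Finset.card_pos.mpr ⟨x, hx⟩
      omega
    have hABeq : S ∩ (A ∪ B) = S ∩ M :=
      Finset.Subset.antisymm hSABM
        (fun y hy => mem_inter.mpr ⟨mem_of_mem_inter_left hy, hsub hy⟩)
    have hsum : (S ∩ A).card + (S ∩ B).card = q * s := by
      have h1 : S ∩ (A ∪ B) = (S ∩ A) ∪ (S ∩ B) := Finset.inter_union_distrib_left _ _ _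
      have h2 : Disjoint (S ∩ A) (S ∩ B) :=
        hAB.mono Finset.inter_subset_right Finset.inter_subset_right
      rw [← Finset.card_union_of_disjoint h2, ← h1, hABeq, heq]
    have huS : ∀ i : Fin s, u i ∉ S := by
      intro i hiS
      have h1 : u i ∈ A ∪ B := hsub (mem_inter.mpr ⟨hiS, hUM i⟩)
      have h2 : u i ∈ UU := mem_image_of_mem u (mem_univ i)
      rcases mem_union.mp h1 with h | h
      · exact Finset.disjoint_left.mp hAU h h2
      · exact Finset.disjoint_left.mp hBU h h2
    have hwS : ∀ i : Fin s, w i ∉ S := by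
      intro i hiS
      have h1 : w i ∈ A ∪ B := hsub (mem_inter.mpr ⟨hiS, hWM i⟩)
      have h2 : w i ∈ WW := mem_image_of_mem w (mem_univ i)
      rcases mem_union.mp h1 with h | h
      · exact Finset.disjoint_left.mp hAW h h2
      · exact Finset.disjoint_left.mp hBW h h2
    have hPS : ∀ p ∈ P, p ∉ S := by
      intro p hp hpS
      have h1 : p ∈ A ∪ B := hsub (mem_inter.mpr ⟨hpS, hPM hp⟩)
      rcases mem_union.mp h1 with h | h
      · exact Finset.disjoint_left.mp hAP h hp
      · exact Finset.disjoint_left.mp hBP h hp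
    have hdA : q ∣ (S ∩ A).card := by
      by_contra hnd
      have hq : 0 < q := by
        rcases Nat.eq_zero_or_pos q with hq0 | hq
        · subst hq0
          simp only [Nat.zero_mul] at hsum
          exact absurd (Nat.zero_dvd.mpr (by omega)) hnd
        · exact hq
      obtain ⟨a0, r, hr0, hrq, hmod⟩ :
          ∃ a0 r : ℕ, 0 < r ∧ r < q ∧ q * a0 + r = (S ∩ A).card :=
        ⟨(S ∩ A).card / q, (S ∩ A).card % q,
          Nat.pos_of_ne_zero (fun h => hnd (Nat.dvd_of_mod_eq_zero h)),
          Nat.mod_lt _ hq, Nat.div_add_mod _ q⟩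
      have ha0s : a0 < s := by
        refine Nat.lt_of_mul_lt_mul_left (a := q) ?_
        omega
      have hs1 : 1 ≤ s := by omega
      have hBS : ¬ B ⊆ S := by
        intro h
        have h1 : B ⊆ S ∩ B := fun x hx => mem_inter.mpr ⟨h hx, hx⟩
        have := Finset.card_le_card h1
        omega
      obtain ⟨b0, hb0B, hb0S⟩ := Finset.not_subset.mp hBS
      set I : Finset V → Prop := fun T =>
        T ∩ A ⊆ S ∧ T ∩ B ⊆ S ∧ (∀ i : Fin s, u i ∈ T → i.val < a0) ∧
        (∀ i : Fin s, w i ∈ T → i.val + a0 + 2 ≤ s) ∧ (∀ p ∈ P, p ∉ T) with hIdef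
      have h0 : I S :=
        ⟨Finset.inter_subset_left, Finset.inter_subset_left,
          fun i hi => absurd hi (huS i), fun i hi => absurd hi (hwS i), hPS⟩
      have hstep : ∀ T, I T → I (actStep G f T) := by
        intro T hT
        obtain ⟨hTA, hTB, hTu, hTw, hTP⟩ := hT
        have hcardA : (A ∩ T).card ≤ (S ∩ A).card := by
          apply Finset.card_le_card
          intro x hx
          rw [mem_inter] at hx ⊢
          exact ⟨hTA (mem_inter.mpr ⟨hx.2, hx.1⟩), hx.1⟩
        have hcardB : (B ∩ T).card ≤ (S ∩ B).card := by
          apply Finset.card_le_card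
          intro x hx
          rw [mem_inter] at hx ⊢
          exact ⟨hTB (mem_inter.mpr ⟨hx.2, hx.1⟩), hx.1⟩
        have hPT : P ∩ T = ∅ := by
          rw [Finset.eq_empty_iff_forall_notMem]
          intro x hx
          rw [mem_inter] at hx
          exact hTP x hx.1 hx.2
        refine ⟨?_, ?_, ?_, ?_, ?_⟩
        · intro v hv
          rw [mem_inter] at hv
          obtain ⟨hv1, hv2⟩ := hv
          rcases mem_actStep_iff.mp hv1 with h | h
          · exact hTA (mem_inter.mpr ⟨h, hv2⟩)
          · exfalso
            have hN := hfull v (mem_union_left _ hv2) T h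
            have hvm : v ∈ G.neighborFinset (u ⟨s - 1, by omega⟩) := by
              rw [hUnbr]
              exact mem_union_left _ hv2
            have h2 : u ⟨s - 1, by omega⟩ ∈ T := hN ((hadj _ v).mpr hvm)
            have h3 : s - 1 < a0 := hTu _ h2
            omega
        · intro v hv
          rw [mem_inter] at hv
          obtain ⟨hv1, hv2⟩ := hv
          rcases mem_actStep_iff.mp hv1 with h | h
          · exact hTB (mem_inter.mpr ⟨h, hv2⟩)
          · exfalso
            have hN := hfull v (mem_union_right _ hv2) T h
            have hvm : v ∈ G.neighborFinset (w ⟨s - 1, by omega⟩) := by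
              rw [hWnbr]
              exact mem_union_left _ hv2
            have h2 : w ⟨s - 1, by omega⟩ ∈ T := hN ((hadj _ v).mpr hvm)
            have h3 : (s - 1) + a0 + 2 ≤ s := hTw _ h2
            omega
        · intro i hi
          rcases mem_actStep_iff.mp hi with h | h
          · exact hTu i h
          · rw [hfU i, hUnbr i] at h
            rw [hsplit A P T hAP] at h
            have hP0 : (P ∩ T).card = 0 := by rw [hPT]; rfl
            have hmul : q * (a0 + 1) = q * a0 + q := by ring
            have hlt : q * (i.val + 1) < q * (a0 + 1) := by omega
            have := Nat.lt_of_mul_lt_mul_left hlt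
            omega
        · intro i hi
          rcases mem_actStep_iff.mp hi with h | h
          · exact hTw i h
          · rw [hfW i, hWnbr i] at h
            rw [hsplit B P T hBP] at h
            have hP0 : (P ∩ T).card = 0 := by rw [hPT]; rfl
            have hmul : q * (i.val + 1 + a0) = q * (i.val + 1) + q * a0 := by ring
            have hlt : q * (i.val + 1 + a0) < q * s := by omega
            have := Nat.lt_of_mul_lt_mul_left hlt
            omega
        · intro p hp hmem
          rcases mem_actStep_iff.mp hmem with h | h
          · exact hTP p hp h
          · rw [hfP p hp, hPnbr p hp] at h
            rw [Finset.union_inter_distrib_right] at h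
            have hUT : (UU ∩ T).card ≤ a0 := by
              have hsub2 : UU ∩ T ⊆ (Finset.univ.filter fun i : Fin s => i.val < a0).image u := by
                intro x hx
                rw [mem_inter] at hx
                obtain ⟨i, -, rfl⟩ := mem_image.mp hx.1
                exact mem_image_of_mem u (mem_filter.mpr ⟨mem_univ i, hTu i hx.2⟩)
              calc (UU ∩ T).card ≤ _ := Finset.card_le_card hsub2
                _ = (Finset.univ.filter fun i : Fin s => i.val < a0).card :=
                    Finset.card_image_of_injective _ hu
                _ ≤ (Finset.range a0).card := by
                    apply Finset.card_le_card_of_injOn Fin.val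
                    · intro i hi
                      exact mem_range.mpr (mem_filter.mp hi).2
                    · exact fun x _ y _ hxy => Fin.val_injective hxy
                _ = a0 := Finset.card_range a0
            have hWT : (WW ∩ T).card ≤ s - 1 - a0 := by
              have hsub2 : WW ∩ T ⊆
                  (Finset.univ.filter fun i : Fin s => i.val + a0 + 2 ≤ s).image w := by
                intro x hx
                rw [mem_inter] at hx
                obtain ⟨i, -, rfl⟩ := mem_image.mp hx.1
                exact mem_image_of_mem w (mem_filter.mpr ⟨mem_univ i, hTw i hx.2⟩)
              calc (WW ∩ T).card ≤ _ := Finset.card_le_card hsub2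
                _ = (Finset.univ.filter fun i : Fin s => i.val + a0 + 2 ≤ s).card :=
                    Finset.card_image_of_injective _ hw
                _ ≤ (Finset.range (s - 1 - a0)).card := by
                    apply Finset.card_le_card_of_injOn Fin.val
                    · intro i hi
                      have := (mem_filter.mp hi).2
                      exact mem_range.mpr (by omega)
                    · exact fun x _ y _ hxy => Fin.val_injective hxy
                _ = s - 1 - a0 := Finset.card_range _
            have hUnion := Finset.card_union_le (UU ∩ T) (WW ∩ T)
            omega
      refine absurd hS (not_isTargetSet_of_invariant (v := b0) I h0 hstep ?_)
      exact fun T hT hmem => hb0S (hT.2.1 (mem_inter.mpr ⟨hmem, hb0B⟩))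
    refine ⟨hsub, hdA, ?_⟩
    have hqs : q ∣ (S ∩ A).card + (S ∩ B).card := hsum ▸ dvd_mul_right q s
    exact (Nat.dvd_add_right hdA).mp hqs
  · -- part 2
    intro S a ha hSA hSB
    have hq_s : (S ∩ A).card + (S ∩ B).card = q * s := by
      rw [hSA, hSB, ← Nat.mul_add, Nat.add_sub_cancel' ha]
    have hmono : ∀ i, actProcess G f S i ⊆ actProcess G f S (i + 1) := by
      intro i
      rw [actProcess_succ]
      exact Finset.subset_union_left
    have hD1 : D ⊆ actProcess G f S 1 := by
      intro d hd
      rw [show (1 : ℕ) = 0 + 1 from rfl, actProcess_succ]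
      apply mem_actStep_iff.mpr
      right
      rw [hfD d hd, hDnbr d hd]
      show q * s ≤ ((A ∪ B) ∩ actProcess G f S 0).card
      rw [show actProcess G f S 0 = S from rfl, hsplit A B S hAB]
      have e1 : (A ∩ S).card = (S ∩ A).card := by rw [Finset.inter_comm]
      have e2 : (B ∩ S).card = (S ∩ B).card := by rw [Finset.inter_comm]
      omega
    have hU1 : ∀ i : Fin s, i.val < a → u i ∈ actProcess G f S 1 := by
      intro i hi
      rw [show (1 : ℕ) = 0 + 1 from rfl, actProcess_succ]
      apply mem_actStep_iff.mpr
      right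
      rw [hfU i, hUnbr i]
      show q * (i.val + 1) ≤ ((A ∪ P) ∩ actProcess G f S 0).card
      rw [show actProcess G f S 0 = S from rfl]
      have h1 : S ∩ A ⊆ (A ∪ P) ∩ S := by
        intro x hx
        rw [mem_inter] at hx ⊢
        exact ⟨mem_union_left _ hx.2, hx.1⟩
      have h2 := Finset.card_le_card h1
      have h3 : q * (i.val + 1) ≤ q * a := Nat.mul_le_mul_left q (by omega)
      omega
    have hW1 : ∀ i : Fin s, i.val < s - a → w i ∈ actProcess G f S 1 := by
      intro i hi
      rw [show (1 : ℕ) = 0 + 1 from rfl, actProcess_succ]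
      apply mem_actStep_iff.mpr
      right
      rw [hfW i, hWnbr i]
      show q * (i.val + 1) ≤ ((B ∪ P) ∩ actProcess G f S 0).card
      rw [show actProcess G f S 0 = S from rfl]
      have h1 : S ∩ B ⊆ (B ∪ P) ∩ S := by
        intro x hx
        rw [mem_inter] at hx ⊢
        exact ⟨mem_union_left _ hx.2, hx.1⟩
      have h2 := Finset.card_le_card h1
      have h3 : q * (i.val + 1) ≤ q * (s - a) := Nat.mul_le_mul_left q (by omega)
      omega
    have hP2 : P ⊆ actProcess G f S 2 := by
      intro p hp
      rw [show (2 : ℕ) = 1 + 1 from rfl, actProcess_succ]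
      apply mem_actStep_iff.mpr
      right
      rw [hfP p hp, hPnbr p hp]
      have hfu : ((Finset.univ.filter fun i : Fin s => i.val < a).image u).card = a := by
        rw [Finset.card_image_of_injective _ hu, card_filter_val_lt s a ha]
      have hfw : ((Finset.univ.filter fun i : Fin s => i.val < s - a).image w).card = s - a := by
        rw [Finset.card_image_of_injective _ hw, card_filter_val_lt s (s - a) (by omega)]
      have hdisj2 : Disjoint ((Finset.univ.filter fun i : Fin s => i.val < a).image u)
          ((Finset.univ.filter fun i : Fin s => i.val < s - a).image w) := by
        apply hUW.mono
        · exact Finset.image_subset_image (Finset.subset_univ _)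
        · exact Finset.image_subset_image (Finset.subset_univ _)
      have hkey : ((Finset.univ.filter fun i : Fin s => i.val < a).image u ∪
          (Finset.univ.filter fun i : Fin s => i.val < s - a).image w) ⊆
          (UU ∪ WW) ∩ actProcess G f S 1 := by
        intro x hx
        rcases mem_union.mp hx with h | h
        · obtain ⟨i, hi, rfl⟩ := mem_image.mp h
          exact mem_inter.mpr ⟨mem_union_left _ (mem_image_of_mem u (mem_univ i)),
            hU1 i (mem_filter.mp hi).2⟩
        · obtain ⟨i, hi, rfl⟩ := mem_image.mp h
          exact mem_inter.mpr ⟨mem_union_right _ (mem_image_of_mem w (mem_univ i)),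
            hW1 i (mem_filter.mp hi).2⟩
      have hcard := Finset.card_le_card hkey
      rw [Finset.card_union_of_disjoint hdisj2, hfu, hfw] at hcard
      omega
    have hU3 : ∀ i : Fin s, u i ∈ actProcess G f S 3 := by
      intro i
      rw [show (3 : ℕ) = 2 + 1 from rfl, actProcess_succ]
      apply mem_actStep_iff.mpr
      right
      rw [hfU i, hUnbr i]
      have h1 : P ⊆ (A ∪ P) ∩ actProcess G f S 2 := fun x hx =>
        mem_inter.mpr ⟨mem_union_right _ hx, hP2 hx⟩
      have h2 := Finset.card_le_card h1
      have h3 : q * (i.val + 1) ≤ q * s := Nat.mul_le_mul_left q i.2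
      omega
    have hW3 : ∀ i : Fin s, w i ∈ actProcess G f S 3 := by
      intro i
      rw [show (3 : ℕ) = 2 + 1 from rfl, actProcess_succ]
      apply mem_actStep_iff.mpr
      right
      rw [hfW i, hWnbr i]
      have h1 : P ⊆ (B ∪ P) ∩ actProcess G f S 2 := fun x hx =>
        mem_inter.mpr ⟨mem_union_right _ hx, hP2 hx⟩
      have h2 := Finset.card_le_card h1
      have h3 : q * (i.val + 1) ≤ q * s := Nat.mul_le_mul_left q i.2
      omega
    intro x hx
    rcases mem_union.mp hx with hx | hxP
    · rcases mem_union.mp hx with hx | hxW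
      · rcases mem_union.mp hx with hxD | hxU
        · exact (hmono 2) ((hmono 1) (hD1 hxD))
        · obtain ⟨i, -, rfl⟩ := mem_image.mp hxU
          exact hU3 i
      · obtain ⟨i, -, rfl⟩ := mem_image.mp hxW
        exact hW3 i
    · exact (hmono 2) (hP2 hxP)
end

section
/- If the k-partite graph G contains a clique of size k (necessarily one vertex from each color class), then the constructed graph G′ with threshold function f has a target set of size k′ = k·n + C(k,2)·n²·m. -/
open Finset

/-- Unordered pairs `a < b` of color classes. -/
abbrev ColPair (k : ℕ) := {p : Fin k × Fin k // p.1 < p.2}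

/-- The color class of the side `c` of the pair `p` (`true` is the smaller side). -/
def sideCol {k : ℕ} (p : ColPair k) (c : Bool) : Fin k :=
  if c then p.val.1 else p.val.2

/-- The vertices of the constructed graph `G'`: for every color class `a` the selection
gadget `L_a(n, n+1)` with selection parts `A_a`, `B_a` and guard `D_a`; for every pair
`a < b` the multiple gadget `M_ab(n², n²m, m, m+1)` with selection parts `A_ab`, `B_ab`,
guard `D_ab`, vertex sets `U_ab = {u_1, …, u_m}`, `W_ab = {w_1, …, w_m}` and guard
`P_ab`; and for every pair `a < b` and side `c` the incidence gadget with vertex sets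
`X_{c:ab} = {x_0, …, x_m}`, `Y_{c:ab} = {y_0, …, y_m}` and guard `Z_{c:ab}`. -/
inductive Vtx (k n m : ℕ) : Type
  | Aa (a : Fin k) (i : Fin n)
  | Ba (a : Fin k) (i : Fin n)
  | Da (a : Fin k) (i : Fin (n + 1))
  | Aab (p : ColPair k) (i : Fin (n ^ 2 * m))
  | Bab (p : ColPair k) (i : Fin (n ^ 2 * m))
  | Dab (p : ColPair k) (i : Fin (m + 1))
  | Uab (p : ColPair k) (i : Fin m)
  | Wab (p : ColPair k) (i : Fin m)
  | Pab (p : ColPair k) (i : Fin (n ^ 2 * m))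
  | Xv (p : ColPair k) (c : Bool) (j : Fin (m + 1))
  | Yv (p : ColPair k) (c : Bool) (j : Fin (m + 1))
  | Zv (p : ColPair k) (c : Bool) (i : Fin (n + n ^ 2 * m))
  deriving DecidableEq, Fintype

/-- One direction of the adjacency relation of `G'`, listing all joined pairs of sets:
`D_a` to `A_a` and `B_a`; `D_ab` to `A_ab` and `B_ab`; `U_ab` to `A_ab`; `W_ab` to
`B_ab`; `P_ab` to `U_ab` and `W_ab`; `X_{c:ab}` to `A_c` and `A_ab`; `Y_{c:ab}` to `B_c`
and `B_ab`; and `Z_{c:ab}` to `X_{c:ab}` and `Y_{c:ab}`. -/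
def relB {k n m : ℕ} : Vtx k n m → Vtx k n m → Bool
  | .Da a _, .Aa a' _ => decide (a = a')
  | .Da a _, .Ba a' _ => decide (a = a')
  | .Dab p _, .Aab p' _ => decide (p = p')
  | .Dab p _, .Bab p' _ => decide (p = p')
  | .Uab p _, .Aab p' _ => decide (p = p')
  | .Wab p _, .Bab p' _ => decide (p = p')
  | .Pab p _, .Uab p' _ => decide (p = p')
  | .Pab p _, .Wab p' _ => decide (p = p')
  | .Xv p c _, .Aa a _ => decide (sideCol p c = a)
  | .Xv p _ _, .Aab p' _ => decide (p = p')
  | .Yv p c _, .Ba a _ => decide (sideCol p c = a)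
  | .Yv p _ _, .Bab p' _ => decide (p = p')
  | .Zv p c _, .Xv p' c' _ => decide (p = p' ∧ c = c')
  | .Zv p c _, .Yv p' c' _ => decide (p = p' ∧ c = c')
  | _, _ => false

/-- The constructed graph `G'`. -/
def Gp (k n m : ℕ) : SimpleGraph (Vtx k n m) where
  Adj x y := x ≠ y ∧ (relB x y = true ∨ relB y x = true)
  symm := ⟨by rintro x y ⟨hne, h⟩; exact ⟨hne.symm, h.symm⟩⟩
  loopless := ⟨by rintro x ⟨hne, -⟩; exact hne rfl⟩

instance (k n m : ℕ) : DecidableRel (Gp k n m).Adj := fun x y =>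
  inferInstanceAs (Decidable (x ≠ y ∧ (relB x y = true ∨ relB y x = true)))

/-- The threshold function of `G'`, where `ep p c j` is the index in `V_{c(p)}` of the
endpoint of the edge `e_j ∈ E_ab` lying in the color class of side `c` of `p = (a,b)`:
vertices of the selection parts have threshold equal to their degree; guards `D_a` have
threshold `n`; guards `D_ab` have threshold `n²m`; `u_i` and `w_i` have threshold
`n²·i`; guards `P_ab` have threshold `m`; `x_j` has threshold `i + n²·j` and `y_j` has
threshold `(n - i) + n²·(m - j)` where `v_i` is the endpoint of `e_j` on the
corresponding side; and guards `Z_{c:ab}` have threshold `m + 2`. -/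
def thr (k n m : ℕ) (ep : ColPair k → Bool → Fin (m + 1) → Fin (n + 1)) :
    Vtx k n m → ℕ
  | .Aa a i => (Gp k n m).degree (.Aa a i)
  | .Ba a i => (Gp k n m).degree (.Ba a i)
  | .Da _ _ => n
  | .Aab p i => (Gp k n m).degree (.Aab p i)
  | .Bab p i => (Gp k n m).degree (.Bab p i)
  | .Dab _ _ => n ^ 2 * m
  | .Uab _ i => n ^ 2 * (i.val + 1)
  | .Wab _ i => n ^ 2 * (i.val + 1)
  | .Pab _ _ => m
  | .Xv p c j => (ep p c j).val + n ^ 2 * j.val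
  | .Yv p c j => (n - (ep p c j).val) + n ^ 2 * (m - j.val)
  | .Zv _ _ _ => m + 2

/-! ### Auxiliary lemmas -/

section ActHelpers

variable {V : Type*} [Fintype V] [DecidableEq V] (G : SimpleGraph V) [DecidableRel G.Adj]
  (f : V → ℕ)

lemma subset_actStep (T : Finset V) : T ⊆ actStep G f T := Finset.subset_union_left

lemma actProcess_subset (S : Finset V) {i j : ℕ} (h : i ≤ j) :
    actProcess G f S i ⊆ actProcess G f S j := by
  induction h with
  | refl => exact subset_rfl
  | step _ ih => exact ih.trans (subset_actStep G f _)

lemma mem_actStep_of_inj {v : V} {T : Finset V} {t : ℕ}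
    (φ : Fin t → V) (hφ : Function.Injective φ)
    (h : ∀ i, G.Adj v (φ i) ∧ φ i ∈ T) (hf : f v ≤ t) :
    v ∈ actStep G f T := by
  refine Finset.mem_union.mpr (Or.inr (Finset.mem_filter.mpr ⟨Finset.mem_univ _, ?_⟩))
  calc f v ≤ t := hf
    _ = (Finset.univ.image φ).card := by
        rw [Finset.card_image_of_injective _ hφ, Finset.card_univ, Fintype.card_fin]
    _ ≤ _ := Finset.card_le_card (fun w hw => by
        obtain ⟨i, -, rfl⟩ := Finset.mem_image.mp hw
        exact Finset.mem_inter.mpr ⟨(SimpleGraph.mem_neighborFinset _ _ _).mpr (h i).1, (h i).2⟩)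

lemma mem_actStep_full {v : V} {T : Finset V} (hf : f v = G.degree v)
    (h : ∀ w, G.Adj v w → w ∈ T) : v ∈ actStep G f T := by
  refine Finset.mem_union.mpr (Or.inr (Finset.mem_filter.mpr ⟨Finset.mem_univ _, ?_⟩))
  have hsub : G.neighborFinset v ⊆ T := fun w hw =>
    h w ((SimpleGraph.mem_neighborFinset _ _ _).mp hw)
  rw [Finset.inter_eq_left.mpr hsub, ← SimpleGraph.card_neighborFinset_eq_degree] at *
  exact le_of_eq hf


end ActHelpers

lemma injective_split {s t : ℕ} {α : Type*} (φ1 : Fin s → α) (φ2 : Fin t → α)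
    (h1 : Function.Injective φ1) (h2 : Function.Injective φ2)
    (hd : ∀ i j, φ1 i ≠ φ2 j) :
    Function.Injective (fun l : Fin (s + t) =>
      if h : l.val < s then φ1 ⟨l.val, h⟩
      else φ2 ⟨l.val - s, by have := l.isLt; omega⟩) := by
  intro a b hab
  dsimp only at hab
  split at hab <;> split at hab
  · have := h1 hab; simp only [Fin.mk.injEq] at this; exact Fin.ext this
  · exact absurd hab (hd _ _)
  · exact absurd hab.symm (hd _ _)
  · have := h2 hab; simp only [Fin.mk.injEq] at this
    have ha := a.isLt; have hb := b.isLt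
    exact Fin.ext (by omega)

lemma mem_actStep_split {V : Type*} [Fintype V] [DecidableEq V] (G : SimpleGraph V)
    [DecidableRel G.Adj] (f : V → ℕ) {v : V} {T : Finset V} {s t : ℕ}
    (φ1 : Fin s → V) (φ2 : Fin t → V)
    (h1 : Function.Injective φ1) (h2 : Function.Injective φ2)
    (hd : ∀ i j, φ1 i ≠ φ2 j)
    (m1 : ∀ i, G.Adj v (φ1 i) ∧ φ1 i ∈ T) (m2 : ∀ j, G.Adj v (φ2 j) ∧ φ2 j ∈ T)
    (hf : f v ≤ s + t) : v ∈ actStep G f T := by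
  refine mem_actStep_of_inj G f _ (injective_split φ1 φ2 h1 h2 hd) ?_ hf
  intro l
  split
  · exact m1 _
  · exact m2 _


lemma colPair_card (k : ℕ) : Fintype.card (ColPair k) = k * (k - 1) / 2 := by
  have e : ColPair k ≃ (Σ j : Fin k, Fin j.val) :=
    { toFun := fun p => ⟨p.val.2, ⟨p.val.1.val, p.prop⟩⟩
      invFun := fun x => ⟨(⟨x.2.val, lt_trans x.2.isLt x.1.isLt⟩, x.1), x.2.isLt⟩
      left_inv := fun p => rfl
      right_inv := fun x => rfl }
  rw [Fintype.card_congr e, Fintype.card_sigma]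
  simp only [Fintype.card_fin]
  rw [Fin.sum_univ_eq_sum_range (fun i => i) k, Finset.sum_range_id]

/-- The initial selection: `c a` vertices of `A_a` and `n - c a` of `B_a` in each color
class, `n²·j_p` vertices of `A_ab` and `n²·(m - j_p)` of `B_ab` for each pair. -/
def Fsel (k n m : ℕ) (cs : Fin k → Fin (n + 1)) (js : ColPair k → Fin (m + 1)) :
    (Fin k × Fin n) ⊕ (ColPair k × Fin (n ^ 2 * m)) → Vtx k n m
  | .inl (a, i) =>
      if i.val < (cs a).val then .Aa a i
      else .Ba a ⟨i.val - (cs a).val, by have := i.isLt; omega⟩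
  | .inr (p, i) =>
      if i.val < n ^ 2 * (js p).val then .Aab p i
      else .Bab p ⟨i.val - n ^ 2 * (js p).val, by have := i.isLt; omega⟩

lemma Fsel_inj (k n m : ℕ) (cs : Fin k → Fin (n + 1)) (js : ColPair k → Fin (m + 1)) :
    Function.Injective (Fsel k n m cs js) := by
  intro x y hxy
  rcases x with ⟨a, i⟩ | ⟨p, i⟩ <;> rcases y with ⟨b, j⟩ | ⟨q, j⟩ <;>
    simp only [Fsel] at hxy <;> split at hxy <;> split at hxy <;>
    simp only [Vtx.Aa.injEq, Vtx.Ba.injEq, Vtx.Aab.injEq, Vtx.Bab.injEq,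
      Fin.mk.injEq, reduceCtorEq] at hxy <;>
    first
      | (obtain ⟨rfl, rfl⟩ := hxy; rfl)
      | (obtain ⟨rfl, hv⟩ := hxy
         have hi := i.isLt; have hj := j.isLt
         have hij : i = j := Fin.ext (by omega)
         rw [hij])
      | exact hxy.elim

section AdjLemmas

variable {k n m : ℕ}

lemma gp_adj_iff (x y : Vtx k n m) :
    (Gp k n m).Adj x y ↔ x ≠ y ∧ (relB x y = true ∨ relB y x = true) := Iff.rfl

lemma adj_Da_Aa (a : Fin k) (i : Fin (n + 1)) (j : Fin n) :
    (Gp k n m).Adj (.Da a i) (.Aa a j) := ⟨by simp, Or.inl (by simp [relB])⟩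

lemma adj_Da_Ba (a : Fin k) (i : Fin (n + 1)) (j : Fin n) :
    (Gp k n m).Adj (.Da a i) (.Ba a j) := ⟨by simp, Or.inl (by simp [relB])⟩

lemma adj_Dab_Aab (p : ColPair k) (i : Fin (m + 1)) (j : Fin (n ^ 2 * m)) :
    (Gp k n m).Adj (.Dab p i) (.Aab p j) := ⟨by simp, Or.inl (by simp [relB])⟩

lemma adj_Dab_Bab (p : ColPair k) (i : Fin (m + 1)) (j : Fin (n ^ 2 * m)) :
    (Gp k n m).Adj (.Dab p i) (.Bab p j) := ⟨by simp, Or.inl (by simp [relB])⟩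

lemma adj_Uab_Aab (p : ColPair k) (i : Fin m) (j : Fin (n ^ 2 * m)) :
    (Gp k n m).Adj (.Uab p i) (.Aab p j) := ⟨by simp, Or.inl (by simp [relB])⟩

lemma adj_Wab_Bab (p : ColPair k) (i : Fin m) (j : Fin (n ^ 2 * m)) :
    (Gp k n m).Adj (.Wab p i) (.Bab p j) := ⟨by simp, Or.inl (by simp [relB])⟩

lemma adj_Pab_Uab (p : ColPair k) (i : Fin (n ^ 2 * m)) (j : Fin m) :
    (Gp k n m).Adj (.Pab p i) (.Uab p j) := ⟨by simp, Or.inl (by simp [relB])⟩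

lemma adj_Pab_Wab (p : ColPair k) (i : Fin (n ^ 2 * m)) (j : Fin m) :
    (Gp k n m).Adj (.Pab p i) (.Wab p j) := ⟨by simp, Or.inl (by simp [relB])⟩

lemma adj_Xv_Aa (p : ColPair k) (c : Bool) (j : Fin (m + 1)) (i : Fin n) :
    (Gp k n m).Adj (.Xv p c j) (.Aa (sideCol p c) i) := ⟨by simp, Or.inl (by simp [relB])⟩

lemma adj_Xv_Aab (p : ColPair k) (c : Bool) (j : Fin (m + 1)) (i : Fin (n ^ 2 * m)) :
    (Gp k n m).Adj (.Xv p c j) (.Aab p i) := ⟨by simp, Or.inl (by simp [relB])⟩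

lemma adj_Yv_Ba (p : ColPair k) (c : Bool) (j : Fin (m + 1)) (i : Fin n) :
    (Gp k n m).Adj (.Yv p c j) (.Ba (sideCol p c) i) := ⟨by simp, Or.inl (by simp [relB])⟩

lemma adj_Yv_Bab (p : ColPair k) (c : Bool) (j : Fin (m + 1)) (i : Fin (n ^ 2 * m)) :
    (Gp k n m).Adj (.Yv p c j) (.Bab p i) := ⟨by simp, Or.inl (by simp [relB])⟩

lemma adj_Zv_Xv (p : ColPair k) (c : Bool) (i : Fin (n + n ^ 2 * m)) (j : Fin (m + 1)) :
    (Gp k n m).Adj (.Zv p c i) (.Xv p c j) := ⟨by simp, Or.inl (by simp [relB])⟩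

lemma adj_Zv_Yv (p : ColPair k) (c : Bool) (i : Fin (n + n ^ 2 * m)) (j : Fin (m + 1)) :
    (Gp k n m).Adj (.Zv p c i) (.Yv p c j) := ⟨by simp, Or.inl (by simp [relB])⟩

end AdjLemmas

/-- If the `k`-partite graph `G` (with color classes of size `n+1` and `m+1` edges
between every two classes, the edge `e_j` between classes `a < b` having endpoints
`v_{ep p true j} ∈ V_a` and `v_{ep p false j} ∈ V_b`) contains a clique of size `k`,
then the constructed graph `G'` has a target set of size `k' = k·n + C(k,2)·n²·m`. -/

theorem clique_to_target_set (k n m : ℕ) (hk : 2 ≤ k)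
    (ep : ColPair k → Bool → Fin (m + 1) → Fin (n + 1))
    (hinj : ∀ p : ColPair k, Function.Injective fun j => (ep p true j, ep p false j))
    (hclique : ∃ c : Fin k → Fin (n + 1), ∀ p : ColPair k,
      ∃ j : Fin (m + 1), ep p true j = c p.val.1 ∧ ep p false j = c p.val.2) :
    ∃ S : Finset (Vtx k n m),
      S.card = k * n + (k * (k - 1) / 2) * (n ^ 2 * m) ∧
      IsTargetSet (Gp k n m) (thr k n m ep) S := by
  classical
  obtain ⟨cs, hcs⟩ := hclique
  choose js hjs1 hjs2 using hcs
  have hepc : ∀ (p : ColPair k) (c : Bool), (ep p c (js p)).val = (cs (sideCol p c)).val := by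
    intro p c
    cases c
    · rw [show sideCol p false = p.val.2 from rfl, hjs2]
    · rw [show sideCol p true = p.val.1 from rfl, hjs1]
  have hcsle : ∀ a, (cs a).val ≤ n := fun a => by have := (cs a).isLt; omega
  have hjsle : ∀ p, (js p).val ≤ m := fun p => by have := (js p).isLt; omega
  have hnn : n ≤ n ^ 2 := Nat.le_self_pow two_ne_zero n
  have hsplitm : ∀ p : ColPair k,
      n ^ 2 * (js p).val + n ^ 2 * (m - (js p).val) = n ^ 2 * m := fun p => by
    rw [← Nat.mul_add]; congr 1; have := hjsle p; omega
  have hmulm : ∀ x : ℕ, x ≤ m → n ^ 2 * x ≤ n ^ 2 * m := fun x hx => Nat.mul_le_mul_left _ hx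
  set S : Finset (Vtx k n m) := Finset.univ.image (Fsel k n m cs js) with hSdef
  have hSAa : ∀ (a : Fin k) (i : Fin n), i.val < (cs a).val → Vtx.Aa a i ∈ S := by
    intro a i h
    refine Finset.mem_image.mpr ⟨Sum.inl (a, i), Finset.mem_univ _, ?_⟩
    simp [Fsel, h]
  have hSBa : ∀ (a : Fin k) (i : Fin n), i.val < n - (cs a).val → Vtx.Ba a i ∈ S := by
    intro a i h
    refine Finset.mem_image.mpr
      ⟨Sum.inl (a, ⟨(cs a).val + i.val, by have := hcsle a; omega⟩), Finset.mem_univ _, ?_⟩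
    have hlt : ¬ ((cs a).val + i.val < (cs a).val) := by omega
    simp only [Fsel, if_neg hlt]
    exact congrArg (Vtx.Ba a) (Fin.ext (show (cs a).val + i.val - (cs a).val = i.val by omega))
  have hSAab : ∀ (p : ColPair k) (i : Fin (n ^ 2 * m)),
      i.val < n ^ 2 * (js p).val → Vtx.Aab p i ∈ S := by
    intro p i h
    refine Finset.mem_image.mpr ⟨Sum.inr (p, i), Finset.mem_univ _, ?_⟩
    simp [Fsel, h]
  have hSBab : ∀ (p : ColPair k) (i : Fin (n ^ 2 * m)),
      i.val < n ^ 2 * (m - (js p).val) → Vtx.Bab p i ∈ S := by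
    intro p i h
    have hs := hsplitm p
    refine Finset.mem_image.mpr
      ⟨Sum.inr (p, ⟨n ^ 2 * (js p).val + i.val, by omega⟩), Finset.mem_univ _, ?_⟩
    have hlt : ¬ (n ^ 2 * (js p).val + i.val < n ^ 2 * (js p).val) := by omega
    simp only [Fsel, if_neg hlt]
    exact congrArg (Vtx.Bab p)
      (Fin.ext (show n ^ 2 * (js p).val + i.val - n ^ 2 * (js p).val = i.val by omega))
  have hcard : S.card = k * n + (k * (k - 1) / 2) * (n ^ 2 * m) := by
    rw [hSdef, Finset.card_image_of_injective _ (Fsel_inj k n m cs js), Finset.card_univ]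
    simp [Fintype.card_sum, Fintype.card_prod, Fintype.card_fin, colPair_card]
  have hmono : ∀ i j : ℕ, i ≤ j →
      actProcess (Gp k n m) (thr k n m ep) S i ⊆ actProcess (Gp k n m) (thr k n m ep) S j :=
    fun _ _ h => actProcess_subset _ _ _ h
  -- Round 1
  have h1Da : ∀ (a : Fin k) (d : Fin (n + 1)),
      Vtx.Da a d ∈ actProcess (Gp k n m) (thr k n m ep) S 1 := by
    intro a d
    have hc := hcsle a
    refine mem_actStep_split _ _
      (fun l : Fin (cs a).val => Vtx.Aa a ⟨l.val, by have := l.isLt; omega⟩)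
      (fun l : Fin (n - (cs a).val) => Vtx.Ba a ⟨l.val, by have := l.isLt; omega⟩)
      ?_ ?_ (fun i j => by simp)
      (fun l => ⟨adj_Da_Aa a d _, hSAa a _ l.isLt⟩)
      (fun l => ⟨adj_Da_Ba a d _, hSBa a _ l.isLt⟩)
      (by simp only [thr]; omega)
    all_goals
      intro x y hxy
      simp only [Vtx.Aa.injEq, Vtx.Ba.injEq, Fin.mk.injEq, Fin.ext_iff, true_and,
        eq_self_iff_true] at hxy ⊢
      omega
  have h1Dab : ∀ (p : ColPair k) (d : Fin (m + 1)),
      Vtx.Dab p d ∈ actProcess (Gp k n m) (thr k n m ep) S 1 := by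
    intro p d
    have hs := hsplitm p
    refine mem_actStep_split _ _
      (fun l : Fin (n ^ 2 * (js p).val) => Vtx.Aab p ⟨l.val, by have := l.isLt; omega⟩)
      (fun l : Fin (n ^ 2 * (m - (js p).val)) => Vtx.Bab p ⟨l.val, by have := l.isLt; omega⟩)
      ?_ ?_ (fun i j => by simp)
      (fun l => ⟨adj_Dab_Aab p d _, hSAab p _ l.isLt⟩)
      (fun l => ⟨adj_Dab_Bab p d _, hSBab p _ l.isLt⟩)
      (by simp only [thr]; omega)
    all_goals
      intro x y hxy
      simp only [Vtx.Aab.injEq, Vtx.Bab.injEq, Fin.mk.injEq, Fin.ext_iff, true_and,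
        eq_self_iff_true] at hxy ⊢
      omega
  have h1U : ∀ (p : ColPair k) (i : Fin m), i.val < (js p).val →
      Vtx.Uab p i ∈ actProcess (Gp k n m) (thr k n m ep) S 1 := by
    intro p i hi
    have hs := hsplitm p
    refine mem_actStep_of_inj _ _ (t := n ^ 2 * (js p).val)
      (fun l => Vtx.Aab p ⟨l.val, by have := l.isLt; omega⟩) ?_
      (fun l => ⟨adj_Uab_Aab p i _, hSAab p _ l.isLt⟩)
      (by simp only [thr]; exact Nat.mul_le_mul_left _ (by omega))
    intro x y hxy
    simp only [Vtx.Aab.injEq, Fin.mk.injEq, Fin.ext_iff, true_and] at hxy ⊢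
    omega
  have h1W : ∀ (p : ColPair k) (i : Fin m), i.val < m - (js p).val →
      Vtx.Wab p i ∈ actProcess (Gp k n m) (thr k n m ep) S 1 := by
    intro p i hi
    have hs := hsplitm p
    refine mem_actStep_of_inj _ _ (t := n ^ 2 * (m - (js p).val))
      (fun l => Vtx.Bab p ⟨l.val, by have := l.isLt; omega⟩) ?_
      (fun l => ⟨adj_Wab_Bab p i _, hSBab p _ l.isLt⟩)
      (by simp only [thr]; exact Nat.mul_le_mul_left _ (by omega))
    intro x y hxy
    simp only [Vtx.Bab.injEq, Fin.mk.injEq, Fin.ext_iff, true_and] at hxy ⊢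
    omega
  have h1X : ∀ (p : ColPair k) (c : Bool) (j : Fin (m + 1)), j.val ≤ (js p).val →
      Vtx.Xv p c j ∈ actProcess (Gp k n m) (thr k n m ep) S 1 := by
    intro p c j hj
    have hs := hsplitm p
    rcases eq_or_lt_of_le hj with heq | hlt
    · have hje : j = js p := Fin.ext heq
      subst hje
      have hep := hepc p c
      refine mem_actStep_split _ _
        (fun l : Fin (cs (sideCol p c)).val =>
          Vtx.Aa (sideCol p c) ⟨l.val, by have := l.isLt; have := hcsle (sideCol p c); omega⟩)
        (fun l : Fin (n ^ 2 * (js p).val) => Vtx.Aab p ⟨l.val, by have := l.isLt; omega⟩)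
        ?_ ?_ (fun i j => by simp)
        (fun l => ⟨adj_Xv_Aa p c _ _, hSAa _ _ l.isLt⟩)
        (fun l => ⟨adj_Xv_Aab p c _ _, hSAab _ _ l.isLt⟩)
        (by simp only [thr]; omega)
      all_goals
        intro x y hxy
        simp only [Vtx.Aa.injEq, Vtx.Aab.injEq, Fin.mk.injEq, Fin.ext_iff, true_and,
          eq_self_iff_true] at hxy ⊢
        omega
    · have h1 : (ep p c j).val ≤ n := by have := (ep p c j).isLt; omega
      have h2 : n ^ 2 * (j.val + 1) ≤ n ^ 2 * (js p).val := Nat.mul_le_mul_left _ (by omega)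
      have h3 : n ^ 2 * (j.val + 1) = n ^ 2 * j.val + n ^ 2 := by ring
      refine mem_actStep_of_inj _ _ (t := n ^ 2 * (js p).val)
        (fun l => Vtx.Aab p ⟨l.val, by have := l.isLt; omega⟩) ?_
        (fun l => ⟨adj_Xv_Aab p c j _, hSAab p _ l.isLt⟩)
        (by simp only [thr]; omega)
      intro x y hxy
      simp only [Vtx.Aab.injEq, Fin.mk.injEq, Fin.ext_iff, true_and] at hxy ⊢
      omega
  have h1Y : ∀ (p : ColPair k) (c : Bool) (j : Fin (m + 1)), (js p).val ≤ j.val →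
      Vtx.Yv p c j ∈ actProcess (Gp k n m) (thr k n m ep) S 1 := by
    intro p c j hj
    have hs := hsplitm p
    rcases eq_or_lt_of_le hj with heq | hlt
    · have hje : j = js p := Fin.ext heq.symm
      subst hje
      have hep := hepc p c
      refine mem_actStep_split _ _
        (fun l : Fin (n - (cs (sideCol p c)).val) =>
          Vtx.Ba (sideCol p c) ⟨l.val, by have := l.isLt; omega⟩)
        (fun l : Fin (n ^ 2 * (m - (js p).val)) => Vtx.Bab p ⟨l.val, by have := l.isLt; omega⟩)
        ?_ ?_ (fun i j => by simp)
        (fun l => ⟨adj_Yv_Ba p c _ _, hSBa _ _ l.isLt⟩)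
        (fun l => ⟨adj_Yv_Bab p c _ _, hSBab _ _ l.isLt⟩)
        (by simp only [thr]; omega)
      all_goals
        intro x y hxy
        simp only [Vtx.Ba.injEq, Vtx.Bab.injEq, Fin.mk.injEq, Fin.ext_iff, true_and,
          eq_self_iff_true] at hxy ⊢
        omega
    · have h1 : (ep p c j).val ≤ n := by have := (ep p c j).isLt; omega
      have hjm : j.val ≤ m := by have := j.isLt; omega
      have h2 : n ^ 2 * ((m - j.val) + 1) ≤ n ^ 2 * (m - (js p).val) :=
        Nat.mul_le_mul_left _ (by omega)
      have h3 : n ^ 2 * ((m - j.val) + 1) = n ^ 2 * (m - j.val) + n ^ 2 := by ring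
      refine mem_actStep_of_inj _ _ (t := n ^ 2 * (m - (js p).val))
        (fun l => Vtx.Bab p ⟨l.val, by have := l.isLt; omega⟩) ?_
        (fun l => ⟨adj_Yv_Bab p c j _, hSBab p _ l.isLt⟩)
        (by simp only [thr]; omega)
      intro x y hxy
      simp only [Vtx.Bab.injEq, Fin.mk.injEq, Fin.ext_iff, true_and] at hxy ⊢
      omega
  -- Round 2
  have h2P : ∀ (p : ColPair k) (d : Fin (n ^ 2 * m)),
      Vtx.Pab p d ∈ actProcess (Gp k n m) (thr k n m ep) S 2 := by
    intro p d
    have hjm := hjsle p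
    refine mem_actStep_split _ _
      (fun l : Fin (js p).val => Vtx.Uab p ⟨l.val, by have := l.isLt; omega⟩)
      (fun l : Fin (m - (js p).val) => Vtx.Wab p ⟨l.val, by have := l.isLt; omega⟩)
      ?_ ?_ (fun i j => by simp)
      (fun l => ⟨adj_Pab_Uab p d _, h1U p _ l.isLt⟩)
      (fun l => ⟨adj_Pab_Wab p d _, h1W p _ l.isLt⟩)
      (by simp only [thr]; omega)
    all_goals
      intro x y hxy
      simp only [Vtx.Uab.injEq, Vtx.Wab.injEq, Fin.mk.injEq, Fin.ext_iff, true_and,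
        eq_self_iff_true] at hxy ⊢
      omega
  have h2Z : ∀ (p : ColPair k) (c : Bool) (z : Fin (n + n ^ 2 * m)),
      Vtx.Zv p c z ∈ actProcess (Gp k n m) (thr k n m ep) S 2 := by
    intro p c z
    have hjm := hjsle p
    refine mem_actStep_split _ _
      (fun l : Fin ((js p).val + 1) => Vtx.Xv p c ⟨l.val, by have := l.isLt; omega⟩)
      (fun l : Fin (m - (js p).val + 1) =>
        Vtx.Yv p c ⟨(js p).val + l.val, by have := l.isLt; omega⟩)
      ?_ ?_ (fun i j => by simp)
      (fun l => ⟨adj_Zv_Xv p c z _, h1X p c _ (Nat.lt_succ_iff.mp l.isLt)⟩)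
      (fun l => ⟨adj_Zv_Yv p c z _, h1Y p c _ (Nat.le_add_right _ _)⟩)
      (by simp only [thr]; omega)
    all_goals
      intro x y hxy
      simp only [Vtx.Xv.injEq, Vtx.Yv.injEq, Fin.mk.injEq, Fin.ext_iff, true_and,
        eq_self_iff_true] at hxy ⊢
      omega
  -- Round 3
  have h3X : ∀ (p : ColPair k) (c : Bool) (j : Fin (m + 1)),
      Vtx.Xv p c j ∈ actProcess (Gp k n m) (thr k n m ep) S 3 := by
    intro p c j
    have h1 : (ep p c j).val ≤ n := by have := (ep p c j).isLt; omega
    have h2 : n ^ 2 * j.val ≤ n ^ 2 * m := hmulm _ (by have := j.isLt; omega)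
    refine mem_actStep_of_inj _ _ (t := n + n ^ 2 * m)
      (fun l => Vtx.Zv p c l) ?_
      (fun l => ⟨(adj_Zv_Xv p c l j).symm, h2Z p c l⟩)
      (by simp only [thr]; omega)
    intro x y hxy
    simpa using hxy
  have h3Y : ∀ (p : ColPair k) (c : Bool) (j : Fin (m + 1)),
      Vtx.Yv p c j ∈ actProcess (Gp k n m) (thr k n m ep) S 3 := by
    intro p c j
    have h2 : n ^ 2 * (m - j.val) ≤ n ^ 2 * m := hmulm _ (by omega)
    refine mem_actStep_of_inj _ _ (t := n + n ^ 2 * m)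
      (fun l => Vtx.Zv p c l) ?_
      (fun l => ⟨(adj_Zv_Yv p c l j).symm, h2Z p c l⟩)
      (by simp only [thr]; omega)
    intro x y hxy
    simpa using hxy
  have h3U : ∀ (p : ColPair k) (i : Fin m),
      Vtx.Uab p i ∈ actProcess (Gp k n m) (thr k n m ep) S 3 := by
    intro p i
    refine mem_actStep_of_inj _ _ (t := n ^ 2 * m)
      (fun l => Vtx.Pab p l) ?_
      (fun l => ⟨(adj_Pab_Uab p l i).symm, h2P p l⟩)
      (by simp only [thr]; exact Nat.mul_le_mul_left _ i.isLt)
    intro x y hxy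
    simpa using hxy
  have h3W : ∀ (p : ColPair k) (i : Fin m),
      Vtx.Wab p i ∈ actProcess (Gp k n m) (thr k n m ep) S 3 := by
    intro p i
    refine mem_actStep_of_inj _ _ (t := n ^ 2 * m)
      (fun l => Vtx.Pab p l) ?_
      (fun l => ⟨(adj_Pab_Wab p l i).symm, h2P p l⟩)
      (by simp only [thr]; exact Nat.mul_le_mul_left _ i.isLt)
    intro x y hxy
    simpa using hxy
  -- Round 4: everything
  refine ⟨S, hcard, 4, ?_⟩
  apply Finset.eq_univ_of_forall
  intro v
  cases v
  case Da a d => exact hmono 1 4 (by omega) (h1Da a d)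
  case Dab p d => exact hmono 1 4 (by omega) (h1Dab p d)
  case Pab p d => exact hmono 2 4 (by omega) (h2P p d)
  case Zv p c z => exact hmono 2 4 (by omega) (h2Z p c z)
  case Uab p i => exact hmono 3 4 (by omega) (h3U p i)
  case Wab p i => exact hmono 3 4 (by omega) (h3W p i)
  case Xv p c j => exact hmono 3 4 (by omega) (h3X p c j)
  case Yv p c j => exact hmono 3 4 (by omega) (h3Y p c j)
  case Aa a i =>
    refine mem_actStep_full _ _ rfl ?_
    intro w hadj
    cases w
    case Da b d => exact hmono 1 3 (by omega) (h1Da b d)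
    case Xv p c j => exact h3X p c j
    all_goals (obtain ⟨-, hr⟩ := hadj; simp [relB] at hr)
  case Ba a i =>
    refine mem_actStep_full _ _ rfl ?_
    intro w hadj
    cases w
    case Da b d => exact hmono 1 3 (by omega) (h1Da b d)
    case Yv p c j => exact h3Y p c j
    all_goals (obtain ⟨-, hr⟩ := hadj; simp [relB] at hr)
  case Aab p i =>
    refine mem_actStep_full _ _ rfl ?_
    intro w hadj
    cases w
    case Dab q d => exact hmono 1 3 (by omega) (h1Dab q d)
    case Uab q j => exact h3U q j
    case Xv q c j => exact h3X q c j
    all_goals (obtain ⟨-, hr⟩ := hadj; simp [relB] at hr)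
  case Bab p i =>
    refine mem_actStep_full _ _ rfl ?_
    intro w hadj
    cases w
    case Dab q d => exact hmono 1 3 (by omega) (h1Dab q d)
    case Wab q j => exact h3W q j
    case Yv q c j => exact h3Y q c j
    all_goals (obtain ⟨-, hr⟩ := hadj; simp [relB] at hr)
end
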